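/- Let Γ be a metric graph, let 𝓔 be the set of essential vertices of Γ, and let S be a nonempty finite subset of Γ. If 𝓔 ⊆ S, then S is a vertex set of Γ. -/

import Mathlib

/-!
Common framework: metric graphs via models, tropical morphisms, tropical
modifications, tree gonality, hyperelliptic metric graphs.
-/

/-- A bundled metric space. -/
structure MetSp : Type 1 where
  carrier : Type
  metric : MetricSpace carrier

attribute [instance] MetSp.metric

/-- A finite combinatorial graph: finite vertex and edge types together with an
orientation (a source and a target for each edge).  Multiple edges and loops are
allowed. -/
structure FinGraph : Type 1 where
  V : Type
  E : Type
  fintypeV : Fintype V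
  fintypeE : Fintype E
  src : E → V
  tgt : E → V

attribute [instance] FinGraph.fintypeV FinGraph.fintypeE

namespace FinGraph

variable (G : FinGraph)

/-- Two vertices are adjacent if some edge joins them. -/
def Adj (u v : G.V) : Prop :=
  ∃ e : G.E, (G.src e = u ∧ G.tgt e = v) ∨ (G.src e = v ∧ G.tgt e = u)

/-- A graph is connected if it has a vertex and any two vertices are joined by a
walk. -/
def Connected : Prop :=
  Nonempty G.V ∧ ∀ u v : G.V, Relation.ReflTransGen G.Adj u v

/-- A graph is loopless if no edge has equal endpoints. -/
def Loopless : Prop := ∀ e : G.E, G.src e ≠ G.tgt e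

/-- The endpoint of the edge `e` selected by `b : Bool` (`false` = source,
`true` = target).  The pairs `(e, b)` are the half-edges (edge-ends) of `G`. -/
def vend (e : G.E) (b : Bool) : G.V := if b then G.tgt e else G.src e

/-- The valence of a vertex: the number of half-edges incident to it (loops are
counted twice). -/
noncomputable def valence (v : G.V) : ℕ :=
  Nat.card {h : G.E × Bool // G.vend h.1 h.2 = v}

end FinGraph

/-- The data exhibiting the metric space `Γ` as the metric graph obtained from the
graph `G` with length map `l` by gluing, for each edge `e`, an interval `[0, l e]`
along its endpoints in the manner prescribed by `G`; that is, `(G, l)` is a model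
of `Γ` and `Γ` is a realization of `(G, l)`:

* `vmap` embeds the vertices of `G` into `Γ` and `emap e` parametrizes the edge `e`
  by the interval `[0, l e]` (by arclength);
* the edges cover `Γ`, they are arcs, their interiors are pairwise disjoint, and
  interiors of edges contain no vertex points;
* the distance on `Γ` is the gluing (path) metric: the infimum of the total length
  of finite chains of points in which consecutive points lie on a common edge. -/
structure ModelMaps (G : FinGraph) (l : G.E → ℝ) (Γ : MetSp) : Type where
  pos : ∀ e, 0 < l e
  conn : G.Connected
  vmap : G.V → Γ.carrier
  emap : G.E → ℝ → Γ.carrier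
  vmap_inj : Function.Injective vmap
  emap_src : ∀ e, emap e 0 = vmap (G.src e)
  emap_tgt : ∀ e, emap e (l e) = vmap (G.tgt e)
  emap_injOn : ∀ e, Set.InjOn (emap e) (Set.Ico 0 (l e))
  cover : ∀ x : Γ.carrier, ∃ e, ∃ t ∈ Set.Icc (0 : ℝ) (l e), emap e t = x
  int_disjoint : ∀ e₁ e₂, e₁ ≠ e₂ → ∀ t₁ ∈ Set.Ioo (0 : ℝ) (l e₁),
    ∀ t₂ ∈ Set.Ioo (0 : ℝ) (l e₂), emap e₁ t₁ ≠ emap e₂ t₂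
  int_not_vertex : ∀ e, ∀ t ∈ Set.Ioo (0 : ℝ) (l e), ∀ v, emap e t ≠ vmap v
  dist_eq : ∀ x y : Γ.carrier, dist x y = sInf {c : ℝ |
    ∃ (n : ℕ) (z : ℕ → Γ.carrier) (w : ℕ → ℝ), z 0 = x ∧ z n = y ∧
      (∀ i < n, ∃ e, ∃ t ∈ Set.Icc (0 : ℝ) (l e), ∃ s ∈ Set.Icc (0 : ℝ) (l e),
        emap e t = z i ∧ emap e s = z (i + 1) ∧ w i = |t - s|) ∧
      c = ∑ i ∈ Finset.range n, w i}

/-- A metric space is a metric graph if it admits a model `(G, l)`. -/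
def IsMetricGraph (Γ : MetSp) : Prop :=
  ∃ (G : FinGraph) (l : G.E → ℝ), Nonempty (ModelMaps G l Γ)

/-- `Γ` has genus `g` if some model `(G, l)` of `Γ` satisfies
`|E(G)| - |V(G)| + 1 = g`. -/
def HasGenus (Γ : MetSp) (g : ℕ) : Prop :=
  ∃ (G : FinGraph) (l : G.E → ℝ) (_ : ModelMaps G l Γ),
    Fintype.card G.E + 1 = Fintype.card G.V + g

/-- A metric tree is a metric graph of genus `0`. -/
def IsMetricTree (T : MetSp) : Prop := HasGenus T 0

/-- `Γ` is a metric loop if it admits a model in which every vertex has valence 2,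
i.e. `Γ` is isometric to a circle. -/
def IsMetricLoop (Γ : MetSp) : Prop :=
  ∃ (G : FinGraph) (l : G.E → ℝ) (_ : ModelMaps G l Γ), ∀ v : G.V, G.valence v = 2

/-- `x` is an essential vertex of `Γ`: for every `ε > 0` the open ball `B(x, ε)` is
not isometric to the open interval `(-ε, ε) ⊆ ℝ`. -/
def IsEssentialVertex (Γ : MetSp) (x : Γ.carrier) : Prop :=
  ∀ ε : ℝ, 0 < ε → ¬ Nonempty (↥(Metric.ball x ε) ≃ᵢ ↥(Set.Ioo (-ε) ε))

/-- `S` is a vertex set of the metric graph `Γ`: `S` is (necessarily finite and) the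
set of vertex points of some model of `Γ`; equivalently, `Γ \ S` is a disjoint union
of finitely many open arcs. -/
def IsVertexSet (Γ : MetSp) (S : Set Γ.carrier) : Prop :=
  ∃ (G : FinGraph) (l : G.E → ℝ) (M : ModelMaps G l Γ), Set.range M.vmap = S

/-- Piecewise linear data for a map `φ : Γ → T` with respect to models
`M₁` of `Γ` and `M₂` of `T`: every vertex is sent to a vertex, and each edge `e` of
`G₁` is mapped into the single edge `edgeTo e` of `G₂` affinely (with respect to the
arclength parametrizations) with integer slope `slope e`. -/
structure PLData {G₁ : FinGraph} {l₁ : G₁.E → ℝ} {Γ : MetSp} (M₁ : ModelMaps G₁ l₁ Γ)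
    {G₂ : FinGraph} {l₂ : G₂.E → ℝ} {T : MetSp} (M₂ : ModelMaps G₂ l₂ T)
    (φ : Γ.carrier → T.carrier) : Type where
  vψ : G₁.V → G₂.V
  vert_map : ∀ v, φ (M₁.vmap v) = M₂.vmap (vψ v)
  edgeTo : G₁.E → G₂.E
  slope : G₁.E → ℤ
  offset : G₁.E → ℝ
  mem : ∀ e, ∀ t ∈ Set.Icc (0 : ℝ) (l₁ e),
    (slope e : ℝ) * t + offset e ∈ Set.Icc (0 : ℝ) (l₂ (edgeTo e))
  maps : ∀ e, ∀ t ∈ Set.Icc (0 : ℝ) (l₁ e),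
    φ (M₁.emap e t) = M₂.emap (edgeTo e) ((slope e : ℝ) * t + offset e)

namespace PLData

variable {G₁ : FinGraph} {l₁ : G₁.E → ℝ} {Γ : MetSp} {M₁ : ModelMaps G₁ l₁ Γ}
  {G₂ : FinGraph} {l₂ : G₂.E → ℝ} {T : MetSp} {M₂ : ModelMaps G₂ l₂ T}
  {φ : Γ.carrier → T.carrier}

/-- The slope of `φ` along the edge `e`, read outward from the endpoint selected
by `b`. -/
def outSlope (D : PLData M₁ M₂ φ) (e : G₁.E) (b : Bool) : ℤ :=
  if b then -D.slope e else D.slope e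

/-- The parameter, on the image edge, of the image of the endpoint of `e` selected
by `b`. -/
def imageParam (D : PLData M₁ M₂ φ) (e : G₁.E) (b : Bool) : ℝ :=
  (D.slope e : ℝ) * (if b then l₁ e else 0) + D.offset e

/-- The half-edge `h` of `G₁` is mapped by `φ` onto the direction (half-edge) `d`
of `G₂`. -/
def MapsToDir (D : PLData M₁ M₂ φ) (h : G₁.E × Bool) (d : G₂.E × Bool) : Prop :=
  D.edgeTo h.1 = d.1 ∧
    ((d.2 = false ∧ D.imageParam h.1 h.2 = 0 ∧ 0 < D.outSlope h.1 h.2) ∨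
     (d.2 = true ∧ D.imageParam h.1 h.2 = l₂ d.1 ∧ D.outSlope h.1 h.2 < 0))

/-- `m_{φ, d}(v)`: the sum of the absolute values of the slopes of `φ` along the
half-edges at `v` that map onto the direction `d` emanating from `φ(v)`. -/
noncomputable def dirSum (D : PLData M₁ M₂ φ) (v : G₁.V) (d : G₂.E × Bool) : ℕ :=
  ∑ᶠ h ∈ {h : G₁.E × Bool | G₁.vend h.1 h.2 = v ∧ D.MapsToDir h d},
    (D.slope h.1).natAbs

/-- Harmonicity at the vertex `v` with local degree `m`: for every direction `d`
emanating from `φ(v)`, the directional sum `m_{φ, d}(v)` equals `m`. -/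
def HarmonicAt (D : PLData M₁ M₂ φ) (v : G₁.V) (m : ℕ) : Prop :=
  ∀ d : G₂.E × Bool, G₂.vend d.1 d.2 = D.vψ v → D.dirSum v d = m

end PLData

/-- `φ : Γ → T` is a tropical morphism of degree `d`: a continuous non-constant map
which, with respect to suitable loopless models of `Γ` and `T`, is piecewise linear
with nonzero integer slopes, harmonic with local degrees `m v`, satisfies the
Riemann–Hurwitz condition `(val v - 2) ≥ m v * (val (φ v) - 2)` at every point, and
has degree `d`: for every point `w` of `T`, the local degrees of the preimages of
`w` sum to `d`. -/
def IsTropicalMorphismOfDegree (Γ T : MetSp) (φ : Γ.carrier → T.carrier) (d : ℕ) : Prop :=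
  Continuous φ ∧ (∃ x y : Γ.carrier, φ x ≠ φ y) ∧
  ∃ (G₁ : FinGraph) (l₁ : G₁.E → ℝ) (M₁ : ModelMaps G₁ l₁ Γ)
    (G₂ : FinGraph) (l₂ : G₂.E → ℝ) (M₂ : ModelMaps G₂ l₂ T)
    (D : PLData M₁ M₂ φ) (m : G₁.V → ℕ),
    G₁.Loopless ∧ G₂.Loopless ∧
    (∀ e, D.slope e ≠ 0) ∧
    (∀ v, D.HarmonicAt v (m v)) ∧
    (∀ v : G₁.V, (m v : ℤ) * ((G₂.valence (D.vψ v) : ℤ) - 2) ≤ (G₁.valence v : ℤ) - 2) ∧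
    (∀ w : G₂.V, ∑ᶠ v ∈ {v : G₁.V | D.vψ v = w}, m v = d)

/-- `w` is a leaf (valence-one point) of `T`. -/
def IsLeaf (T : MetSp) (w : T.carrier) : Prop :=
  ∃ ε : ℝ, 0 < ε ∧ Nonempty (↥(Metric.ball w ε) ≃ᵢ ↥(Set.Ico (0 : ℝ) ε))

/-- `B` is obtained from `A` by grafting one metric tree at a point: there is a
metric tree `T` with a leaf `w`, an isometric copy of `A` and an isometric copy of
`T` covering `B` and meeting exactly in one point, which identifies `w` with a point
`v` of `A`; distances across are `dist x v + dist w y`. -/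
def IsGraft (A B : MetSp) : Prop :=
  ∃ T : MetSp, IsMetricTree T ∧
    ∃ (j : A.carrier → B.carrier) (k : T.carrier → B.carrier)
      (v : A.carrier) (w : T.carrier),
      IsLeaf T w ∧ Isometry j ∧ Isometry k ∧ j v = k w ∧
      Set.range j ∪ Set.range k = Set.univ ∧
      Set.range j ∩ Set.range k = {j v} ∧
      ∀ (x : A.carrier) (y : T.carrier), dist (j x) (k y) = dist x v + dist w y

/-- `B` is a tropical modification of `A`: `B` is obtained from `A` by grafting or
deleting (the inverse operation of grafting) finitely many metric trees at points. -/
def IsTropicalModification (A B : MetSp) : Prop :=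
  Relation.ReflTransGen (fun X Y => IsGraft X Y ∨ IsGraft Y X) A B

/-- `Γ` admits a degree-`d` tropical morphism from some tropical modification of `Γ`
to some metric tree. -/
def AdmitsTropicalDegree (Γ : MetSp) (d : ℕ) : Prop :=
  ∃ (Γ' T : MetSp) (φ : Γ'.carrier → T.carrier),
    IsTropicalModification Γ Γ' ∧ IsMetricTree T ∧ IsTropicalMorphismOfDegree Γ' T φ d

/-- The tree gonality of `Γ` equals `n`: `n` is the minimum of the degrees of all
tropical morphisms from any tropical modification of `Γ` to any metric tree. -/
def TreeGonalityEq (Γ : MetSp) (n : ℕ) : Prop :=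
  IsLeast {d : ℕ | AdmitsTropicalDegree Γ d} n

/-- `Γ` is hyperelliptic: there is a tropical morphism from `Γ` itself to a metric
tree whose degree is the tree gonality of `Γ`. -/
def IsHyperelliptic (Γ : MetSp) : Prop :=
  ∃ n : ℕ, TreeGonalityEq Γ n ∧
    ∃ (T : MetSp) (φ : Γ.carrier → T.carrier),
      IsMetricTree T ∧ IsTropicalMorphismOfDegree Γ T φ n

/-! ### Auxiliary development for Statement 2 -/

namespace VSetAux

open Set

variable {Γ : MetSp}

/-- Chains as in `ModelMaps.dist_eq`, depending only on the lengths and the edge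
parametrizations. -/
def Chain {G : FinGraph} (l : G.E → ℝ) (emap : G.E → ℝ → Γ.carrier)
    (x y : Γ.carrier) (c : ℝ) : Prop :=
  ∃ (n : ℕ) (z : ℕ → Γ.carrier) (w : ℕ → ℝ), z 0 = x ∧ z n = y ∧
    (∀ i < n, ∃ e, ∃ t ∈ Set.Icc (0 : ℝ) (l e), ∃ s ∈ Set.Icc (0 : ℝ) (l e),
      emap e t = z i ∧ emap e s = z (i + 1) ∧ w i = |t - s|) ∧
    c = ∑ i ∈ Finset.range n, w i

theorem dist_eq_chain {G : FinGraph} {l : G.E → ℝ} (M : ModelMaps G l Γ) (x y : Γ.carrier) :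
    dist x y = sInf {c | Chain l M.emap x y c} := M.dist_eq x y

theorem Chain.nonneg {G : FinGraph} {l : G.E → ℝ} {emap : G.E → ℝ → Γ.carrier}
    {x y : Γ.carrier} {c : ℝ} (h : Chain l emap x y c) : 0 ≤ c := by
  obtain ⟨n, z, w, -, -, hstep, rfl⟩ := h
  refine Finset.sum_nonneg fun i hi => ?_
  obtain ⟨e, t, ht, s, hs, -, -, hw⟩ := hstep i (Finset.mem_range.1 hi)
  rw [hw]; positivity

theorem Chain.refl {G : FinGraph} {l : G.E → ℝ} {emap : G.E → ℝ → Γ.carrier}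
    {x : Γ.carrier} : Chain l emap x x 0 :=
  ⟨0, fun _ => x, fun _ => 0, rfl, rfl, fun i hi => absurd hi (by omega), by simp⟩

theorem Chain.single {G : FinGraph} {l : G.E → ℝ} {emap : G.E → ℝ → Γ.carrier}
    {e : G.E} {t s : ℝ} (ht : t ∈ Set.Icc (0:ℝ) (l e)) (hs : s ∈ Set.Icc (0:ℝ) (l e)) :
    Chain l emap (emap e t) (emap e s) |t - s| := by
  refine ⟨1, fun i => if i = 0 then emap e t else emap e s, fun _ => |t - s|,
    by simp, by simp, ?_, by simp⟩
  intro i hi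
  obtain rfl : i = 0 := by omega
  exact ⟨e, t, ht, s, hs, by simp, by simp, rfl⟩

theorem Chain.trans {G : FinGraph} {l : G.E → ℝ} {emap : G.E → ℝ → Γ.carrier}
    {x y z : Γ.carrier} {c₁ c₂ : ℝ} (h₁ : Chain l emap x y c₁) (h₂ : Chain l emap y z c₂) :
    Chain l emap x z (c₁ + c₂) := by
  obtain ⟨n₁, z₁, w₁, hz₁0, hz₁n, hs₁, rfl⟩ := h₁
  obtain ⟨n₂, z₂, w₂, hz₂0, hz₂n, hs₂, rfl⟩ := h₂
  refine ⟨n₁ + n₂, fun i => if i < n₁ then z₁ i else z₂ (i - n₁),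
    fun i => if i < n₁ then w₁ i else w₂ (i - n₁), ?_, ?_, ?_, ?_⟩
  · by_cases h : 0 < n₁
    · simpa [h] using hz₁0
    · obtain rfl : n₁ = 0 := by omega
      simpa using hz₂0.trans (hz₁n.symm.trans hz₁0)
  · have h : ¬ (n₁ + n₂ < n₁) := by omega
    simpa [h] using hz₂n
  · intro i hi
    by_cases h : i < n₁
    · obtain ⟨e, t, ht, s, hs, he₁, he₂, hw⟩ := hs₁ i h
      refine ⟨e, t, ht, s, hs, by simpa [h] using he₁, ?_, by simpa [h] using hw⟩
      by_cases h' : i + 1 < n₁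
      · simpa [h'] using he₂
      · have hin : i + 1 = n₁ := by omega
        simp only [h', if_neg]
        rw [hin, Nat.sub_self, hz₂0, ← hz₁n, ← hin]
        exact he₂
    · obtain ⟨e, t, ht, s, hs, he₁, he₂, hw⟩ := hs₂ (i - n₁) (by omega)
      have h' : ¬ (i + 1 < n₁) := by omega
      have hsub : i + 1 - n₁ = (i - n₁) + 1 := by omega
      exact ⟨e, t, ht, s, hs, by simpa [h] using he₁,
        by simp only [h', if_neg]; rw [hsub]; exact he₂, by simpa [h] using hw⟩
  · rw [Finset.sum_range_add]
    congr 1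
    · exact Finset.sum_congr rfl fun i hi => by
        simp [Finset.mem_range.1 hi]
    · refine Finset.sum_congr rfl fun i hi => ?_
      have h : ¬ (n₁ + i < n₁) := by omega
      simp [h]

theorem Chain.ofSteps {G : FinGraph} {l : G.E → ℝ} {emap : G.E → ℝ → Γ.carrier}
    {G' : FinGraph} {l' : G'.E → ℝ} {emap' : G'.E → ℝ → Γ.carrier}
    (hstep : ∀ e, ∀ t ∈ Set.Icc (0:ℝ) (l e), ∀ s ∈ Set.Icc (0:ℝ) (l e),
      Chain l' emap' (emap e t) (emap e s) |t - s|)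
    {x y : Γ.carrier} {c : ℝ} (h : Chain l emap x y c) : Chain l' emap' x y c := by
  obtain ⟨n, z, w, rfl, rfl, hs, rfl⟩ := h
  induction n with
  | zero => simpa using Chain.refl
  | succ n ih =>
    have htail : Chain l' emap' (z 0) (z n) (∑ i ∈ Finset.range n, w i) :=
      ih (fun i hi => hs i (by omega))
    obtain ⟨e, t, ht, s, hs', he₁, he₂, hw⟩ := hs n (by omega)
    have hlast : Chain l' emap' (z n) (z (n + 1)) (w n) := by
      rw [hw, ← he₁, ← he₂]; exact hstep e t ht s hs'
    rw [Finset.sum_range_succ]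
    exact htail.trans hlast

theorem dist_le_chain {G : FinGraph} {l : G.E → ℝ} (M : ModelMaps G l Γ)
    {x y : Γ.carrier} {c : ℝ} (h : Chain l M.emap x y c) : dist x y ≤ c := by
  rw [dist_eq_chain M x y]
  exact csInf_le ⟨0, fun c hc => hc.nonneg⟩ h

theorem dist_eq_of_steps {G : FinGraph} {l : G.E → ℝ} (M : ModelMaps G l Γ)
    {G' : FinGraph} {l' : G'.E → ℝ} (emap' : G'.E → ℝ → Γ.carrier)
    (h₁ : ∀ e, ∀ t ∈ Set.Icc (0:ℝ) (l e), ∀ s ∈ Set.Icc (0:ℝ) (l e),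
      Chain l' emap' (M.emap e t) (M.emap e s) |t - s|)
    (h₂ : ∀ e, ∀ t ∈ Set.Icc (0:ℝ) (l' e), ∀ s ∈ Set.Icc (0:ℝ) (l' e),
      Chain l M.emap (emap' e t) (emap' e s) |t - s|)
    (x y : Γ.carrier) : dist x y = sInf {c | Chain l' emap' x y c} := by
  rw [dist_eq_chain M x y]
  congr 1
  ext c
  exact ⟨fun h => Chain.ofSteps h₁ h, fun h => Chain.ofSteps h₂ h⟩

theorem abs_le_dist {G : FinGraph} {l : G.E → ℝ} (M : ModelMaps G l Γ)
    (F : Γ.carrier → ℝ)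
    (hF : ∀ e, ∀ t ∈ Set.Icc (0:ℝ) (l e), ∀ s ∈ Set.Icc (0:ℝ) (l e),
      |F (M.emap e t) - F (M.emap e s)| ≤ |t - s|)
    (x y : Γ.carrier) : |F x - F y| ≤ dist x y := by
  have key : ∀ c : ℝ, Chain l M.emap x y c → |F x - F y| ≤ c := by
    rintro c ⟨n, z, w, rfl, rfl, hs, rfl⟩
    induction n with
    | zero => simp
    | succ n ih =>
      have h1 : |F (z 0) - F (z n)| ≤ ∑ i ∈ Finset.range n, w i :=
        ih (fun i hi => hs i (by omega))
      obtain ⟨e, t, ht, s, hs', he₁, he₂, hw⟩ := hs n (by omega)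
      have h2 : |F (z n) - F (z (n + 1))| ≤ w n := by
        rw [hw, ← he₁, ← he₂]; exact hF e t ht s hs'
      rw [Finset.sum_range_succ]
      calc |F (z 0) - F (z (n + 1))| ≤ |F (z 0) - F (z n)| + |F (z n) - F (z (n+1))| :=
            abs_sub_le _ _ _
        _ ≤ _ := add_le_add h1 h2
  have hd := dist_eq_chain M x y
  rcases Set.eq_empty_or_nonempty {c | Chain l M.emap x y c} with hemp | hne
  · rw [hemp, Real.sInf_empty] at hd
    obtain rfl : x = y := eq_of_dist_eq_zero hd
    simp [dist_nonneg]
  · rw [hd]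
    exact le_csInf hne key

section Reps

variable {G : FinGraph} {l : G.E → ℝ}

theorem emap_vend (M : ModelMaps G l Γ) (e : G.E) (b : Bool) :
    M.emap e (if b then l e else 0) = M.vmap (G.vend e b) := by
  cases b <;> simp [FinGraph.vend, M.emap_src, M.emap_tgt]

theorem vertex_rep (M : ModelMaps G l Γ) {e : G.E} {t : ℝ} {u : G.V}
    (ht : t ∈ Set.Icc (0:ℝ) (l e)) (h : M.emap e t = M.vmap u) :
    (t = 0 ∧ G.src e = u) ∨ (t = l e ∧ G.tgt e = u) := by
  rcases ht.1.eq_or_lt with h0 | h0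
  · left
    refine ⟨h0.symm, M.vmap_inj ?_⟩
    rw [← M.emap_src e, h0, h]
  rcases ht.2.eq_or_lt with h1 | h1
  · right
    refine ⟨h1, M.vmap_inj ?_⟩
    rw [← M.emap_tgt e, ← h1, h]
  · exact absurd h (M.int_not_vertex e t ⟨h0, h1⟩ u)

theorem interior_rep (M : ModelMaps G l Γ) {e : G.E} {t : ℝ} {e' : G.E} {t' : ℝ}
    (ht : t ∈ Set.Ioo (0:ℝ) (l e)) (ht' : t' ∈ Set.Icc (0:ℝ) (l e'))
    (h : M.emap e' t' = M.emap e t) : e' = e ∧ t' = t := by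
  rcases ht'.1.eq_or_lt with h0 | h0
  · exact absurd (h.symm.trans (by rw [← h0, M.emap_src]))
      (M.int_not_vertex e t ht _)
  rcases ht'.2.eq_or_lt with h1 | h1
  · exact absurd (h.symm.trans (by rw [h1, M.emap_tgt]))
      (M.int_not_vertex e t ht _)
  by_cases he : e' = e
  · subst he
    exact ⟨rfl, M.emap_injOn e' ⟨le_of_lt h0, h1⟩ ⟨le_of_lt ht.1, ht.2⟩ h⟩
  · exact absurd h (M.int_disjoint e' e he t' ⟨h0, h1⟩ t ht)

theorem exists_halfedge (M : ModelMaps G l Γ) (v : G.V) :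
    ∃ h : G.E × Bool, G.vend h.1 h.2 = v := by
  obtain ⟨e, t, ht, h⟩ := M.cover (M.vmap v)
  rcases vertex_rep M ht h with ⟨-, h⟩ | ⟨-, h⟩
  exacts [⟨(e, false), h⟩, ⟨(e, true), h⟩]

/-- Depth of a parameter along an edge, measured from the end selected by `b`. -/
def dpt (l : G.E → ℝ) (e : G.E) (b : Bool) (t : ℝ) : ℝ := if b then l e - t else t

/-- A "tent" function around the vertex `v`, of height `δ`. -/
noncomputable def dF (M : ModelMaps G l Γ) (v : G.V) (δ : ℝ) (x : Γ.carrier) : ℝ :=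
  sSup (insert 0 {u : ℝ | ∃ e b t, G.vend e b = v ∧ t ∈ Set.Icc (0:ℝ) (l e) ∧
    M.emap e t = x ∧ u = δ - dpt l e b t})

theorem dpt_false {e : G.E} {t : ℝ} : dpt l e false t = t := rfl

theorem dpt_true {e : G.E} {t : ℝ} : dpt l e true t = l e - t := rfl

theorem dpt_nonneg {e : G.E} {b : Bool} {t : ℝ} (ht : t ∈ Set.Icc (0:ℝ) (l e)) :
    0 ≤ dpt l e b t := by
  cases b <;> simp [dpt] <;> [exact ht.1; linarith [ht.2]]

theorem dF_bddAbove (M : ModelMaps G l Γ) (v : G.V) {δ : ℝ} (hδ : 0 ≤ δ) (x : Γ.carrier) :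
    BddAbove (insert 0 {u : ℝ | ∃ e b t, G.vend e b = v ∧ t ∈ Set.Icc (0:ℝ) (l e) ∧
      M.emap e t = x ∧ u = δ - dpt l e b t}) := by
  refine ⟨δ, ?_⟩
  rintro u (rfl | ⟨e, b, t, -, ht, -, rfl⟩)
  · exact hδ
  · linarith [dpt_nonneg (l := l) (b := b) ht]

theorem dF_nonneg (M : ModelMaps G l Γ) (v : G.V) {δ : ℝ} (hδ : 0 ≤ δ) (x : Γ.carrier) :
    0 ≤ dF M v δ x :=
  le_csSup (dF_bddAbove M v hδ x) (Set.mem_insert _ _)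

theorem dF_le (M : ModelMaps G l Γ) (v : G.V) {δ : ℝ} (hδ : 0 ≤ δ) (x : Γ.carrier) :
    dF M v δ x ≤ δ := by
  refine Real.sSup_le ?_ hδ
  rintro u (rfl | ⟨e, b, t, -, ht, -, rfl⟩)
  · exact hδ
  · linarith [dpt_nonneg (l := l) (b := b) ht]

theorem dF_ge_rep (M : ModelMaps G l Γ) {v : G.V} {δ : ℝ} (hδ : 0 ≤ δ) {x : Γ.carrier}
    {e : G.E} {b : Bool} {t : ℝ} (hvb : G.vend e b = v) (ht : t ∈ Set.Icc (0:ℝ) (l e))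
    (hx : M.emap e t = x) : δ - dpt l e b t ≤ dF M v δ x :=
  le_csSup (dF_bddAbove M v hδ x) (Set.mem_insert_iff.2 (Or.inr ⟨e, b, t, hvb, ht, hx, rfl⟩))

theorem vend_mem_Icc (M : ModelMaps G l Γ) (e : G.E) (b : Bool) :
    (if b then l e else 0) ∈ Set.Icc (0:ℝ) (l e) := by
  cases b <;> simp [le_of_lt (M.pos e)]

theorem dpt_vend {e : G.E} (b : Bool) : dpt l e b (if b then l e else 0) = 0 := by
  cases b <;> simp [dpt]

theorem dF_vertex (M : ModelMaps G l Γ) (v : G.V) {δ : ℝ} (hδ : 0 ≤ δ) :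
    dF M v δ (M.vmap v) = δ := by
  refine le_antisymm (dF_le M v hδ _) ?_
  obtain ⟨⟨e, b⟩, hvb⟩ := exists_halfedge M v
  have := dF_ge_rep M hδ (x := M.vmap v) hvb (vend_mem_Icc M e b)
    (by rw [emap_vend, hvb])
  rwa [dpt_vend, sub_zero] at this

theorem dist_le_rep (M : ModelMaps G l Γ) {v : G.V} {e : G.E} {b : Bool} {t : ℝ}
    (hvb : G.vend e b = v) (ht : t ∈ Set.Icc (0:ℝ) (l e)) :
    dist (M.vmap v) (M.emap e t) ≤ dpt l e b t := by
  have h := Chain.single (l := l) (emap := M.emap) (e := e)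
    (vend_mem_Icc M e b) ht
  rw [emap_vend, hvb] at h
  have habs : |(if b then l e else 0) - t| = dpt l e b t := by
    cases b
    · show |(0:ℝ) - t| = t
      rw [zero_sub, abs_neg, abs_of_nonneg ht.1]
    · show |l e - t| = l e - t
      exact abs_of_nonneg (by linarith [ht.2])
  rw [habs] at h
  exact dist_le_chain M h

theorem dF_lip (M : ModelMaps G l Γ) (v : G.V) {δ : ℝ} (hδ : 0 < δ)
    (hδl : ∀ e, δ ≤ l e) (e₀ : G.E) {t s : ℝ}
    (ht : t ∈ Set.Icc (0:ℝ) (l e₀)) (hs : s ∈ Set.Icc (0:ℝ) (l e₀)) :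
    dF M v δ (M.emap e₀ t) ≤ dF M v δ (M.emap e₀ s) + |t - s| := by
  have hF0 := dF_nonneg M v hδ.le (M.emap e₀ s)
  -- helper for the vertex case
  have hvert : M.emap e₀ t = M.vmap v → δ ≤ dF M v δ (M.emap e₀ s) + |t - s| := by
    intro hxv
    rcases vertex_rep M ht hxv with ⟨rfl, hsrc⟩ | ⟨rfl, htgt⟩
    · have h2 := dF_ge_rep M hδ.le (x := M.emap e₀ s) (e := e₀) (b := false) (t := s)
        (by simpa [FinGraph.vend] using hsrc) hs rfl
      have habs : |(0:ℝ) - s| = s := by rw [abs_sub_comm, sub_zero, abs_of_nonneg hs.1]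
      simp only [dpt] at h2
      rw [habs]; simp only [if_neg Bool.false_ne_true] at h2; linarith
    · have h2 := dF_ge_rep M hδ.le (x := M.emap e₀ s) (e := e₀) (b := true) (t := s)
        (by simpa [FinGraph.vend] using htgt) hs rfl
      have habs : |l e₀ - s| = l e₀ - s := abs_of_nonneg (by linarith [hs.2])
      simp only [dpt, if_pos] at h2
      rw [habs]; linarith
  refine Real.sSup_le ?_ (by positivity)
  rintro u (rfl | ⟨e, b, t₁, hvb, ht₁, hrep, rfl⟩)
  · positivity
  by_cases hd : δ ≤ dpt l e b t₁
  · linarith [abs_nonneg (t - s)]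
  push_neg at hd
  rcases ht₁.1.eq_or_lt with h0 | h0
  · -- t₁ = 0 : the point is the vertex `v` (b must be false)
    cases b
    · have hsrc : G.src e = v := hvb
      have hxv : M.emap e₀ t = M.vmap v := by
        rw [← hrep, ← h0, M.emap_src e, hsrc]
      have hd0 : dpt l e false t₁ = 0 := by simp [dpt, ← h0]
      rw [hd0, sub_zero]
      exact hvert hxv
    · exfalso
      have : dpt l e true t₁ = l e := by simp [dpt, ← h0]
      rw [this] at hd
      exact absurd (hδl e) (not_le.2 hd)
  rcases ht₁.2.eq_or_lt with h1 | h1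
  · -- t₁ = l e
    cases b
    · exfalso
      have : dpt l e false t₁ = l e := by simp [dpt, h1]
      rw [this] at hd
      exact absurd (hδl e) (not_le.2 hd)
    · have htgt : G.tgt e = v := hvb
      have hxv : M.emap e₀ t = M.vmap v := by
        rw [← hrep, h1, M.emap_tgt e, htgt]
      have hd0 : dpt l e true t₁ = 0 := by simp [dpt, h1]
      rw [hd0, sub_zero]
      exact hvert hxv
  · -- t₁ interior : unique representation
    obtain ⟨he, ht'⟩ := interior_rep M ⟨h0, h1⟩ ht hrep.symm
    subst he
    subst ht'
    have h2 := dF_ge_rep M hδ.le (x := M.emap e₀ s) hvb (t := s) hs rfl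
    have key : dpt l e₀ b s ≤ dpt l e₀ b t + |t - s| := by
      cases b
      · rw [dpt_false, dpt_false]
        rcases abs_cases (t - s) with ⟨h, h'⟩ | ⟨h, h'⟩ <;> linarith
      · rw [dpt_true, dpt_true]
        rcases abs_cases (t - s) with ⟨h, h'⟩ | ⟨h, h'⟩ <;> linarith
    linarith

theorem dF_lip' (M : ModelMaps G l Γ) (v : G.V) {δ : ℝ} (hδ : 0 < δ)
    (hδl : ∀ e, δ ≤ l e) :
    ∀ e, ∀ t ∈ Set.Icc (0:ℝ) (l e), ∀ s ∈ Set.Icc (0:ℝ) (l e),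
      |dF M v δ (M.emap e t) - dF M v δ (M.emap e s)| ≤ |t - s| := by
  intro e t ht s hs
  rw [abs_sub_le_iff]
  constructor
  · have := dF_lip M v hδ hδl e ht hs; linarith
  · have := dF_lip M v hδ hδl e hs ht
    rw [abs_sub_comm] at this; linarith

theorem dist_ge_dF (M : ModelMaps G l Γ) (v : G.V) {δ : ℝ} (hδ : 0 < δ)
    (hδl : ∀ e, δ ≤ l e) (x : Γ.carrier) :
    δ - dF M v δ x ≤ dist (M.vmap v) x := by
  have h := abs_le_dist M (dF M v δ) (dF_lip' M v hδ hδl) (M.vmap v) x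
  rw [dF_vertex M v hδ.le] at h
  exact (le_abs_self _).trans h

theorem dpt_add {e : G.E} {t : ℝ} : dpt l e false t + dpt l e true t = l e := by
  rw [dpt_false, dpt_true]; ring

theorem sphere_point (M : ModelMaps G l Γ) {v : G.V} {δ : ℝ} (hδ : 0 < δ)
    (h2δ : ∀ e, 2 * δ ≤ l e) {e : G.E} {b : Bool} (hvb : G.vend e b = v)
    {r : ℝ} (hr0 : 0 < r) (hrδ : r < δ) {τ : ℝ} (hτ : dpt l e b τ = r)
    (hτI : τ ∈ Set.Ioo (0:ℝ) (l e)) :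
    dist (M.vmap v) (M.emap e τ) = r := by
  have hδl : ∀ e, δ ≤ l e := fun e => by linarith [h2δ e]
  refine le_antisymm (hτ ▸ dist_le_rep M hvb ⟨hτI.1.le, hτI.2.le⟩) ?_
  have hub : dF M v δ (M.emap e τ) ≤ δ - r := by
    refine Real.sSup_le ?_ (by linarith)
    rintro u (rfl | ⟨e', b', t', hvb', ht', hrep', rfl⟩)
    · linarith
    · obtain ⟨he, ht⟩ := interior_rep M hτI ht' hrep'
      subst he; subst ht
      have hd' : r ≤ dpt l e' b' t' := by
        rcases Bool.eq_false_or_eq_true b' with hb' | hb' <;>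
          rcases Bool.eq_false_or_eq_true b with hb | hb <;> subst hb' <;> subst hb
        · rw [dpt_true] at hτ ⊢; linarith
        · have := dpt_add (l := l) (e := e') (t := t')
          rw [dpt_false] at hτ; rw [dpt_true]; linarith [h2δ e']
        · have := dpt_add (l := l) (e := e') (t := t')
          rw [dpt_true] at hτ; rw [dpt_false]; linarith [h2δ e']
        · rw [dpt_false] at hτ ⊢; linarith
      linarith
  have := dist_ge_dF M v hδ hδl (M.emap e τ)
  linarith

theorem sphere_rep (M : ModelMaps G l Γ) {v : G.V} {δ : ℝ} (hδ : 0 < δ)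
    (h2δ : ∀ e, 2 * δ ≤ l e) {r : ℝ} (hr0 : 0 < r) (hrδ : r < δ) {x : Γ.carrier}
    (hx : dist (M.vmap v) x = r) :
    ∃ e b, G.vend e b = v ∧ x = M.emap e (if b then l e - r else r) := by
  have hδl : ∀ e, δ ≤ l e := fun e => by linarith [h2δ e]
  have h1 : δ - r ≤ dF M v δ x := by
    have := dist_ge_dF M v hδ hδl x; linarith
  have hpos : ∃ u ∈ (insert 0 {u : ℝ | ∃ e b t, G.vend e b = v ∧
      t ∈ Set.Icc (0:ℝ) (l e) ∧ M.emap e t = x ∧ u = δ - dpt l e b t}), 0 < u := by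
    by_contra hcon
    push_neg at hcon
    have : dF M v δ x ≤ 0 := Real.sSup_le (fun u hu => hcon u hu) le_rfl
    linarith
  obtain ⟨u, hu, hupos⟩ := hpos
  rcases hu with rfl | ⟨e, b, t₁, hvb, ht₁, hrepx, rfl⟩
  · exact absurd hupos (lt_irrefl 0)
  have hd : dpt l e b t₁ < δ := by linarith
  have hxne : x ≠ M.vmap v := by
    intro hxv
    rw [hxv, dist_self] at hx
    exact hr0.ne hx
  have ht₁o : t₁ ∈ Set.Ioo (0:ℝ) (l e) := by
    constructor
    · rcases ht₁.1.eq_or_lt with h0 | h0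
      · exfalso
        cases b
        · exact hxne (by rw [← hrepx, ← h0, M.emap_src e]; exact congrArg M.vmap hvb)
        · rw [dpt_true, ← h0, sub_zero] at hd
          exact absurd (hδl e) (not_le.2 hd)
      · exact h0
    · rcases ht₁.2.eq_or_lt with h1 | h1
      · exfalso
        cases b
        · rw [dpt_false, h1] at hd
          exact absurd (hδl e) (not_le.2 hd)
        · exact hxne (by rw [← hrepx, h1, M.emap_tgt e]; exact congrArg M.vmap hvb)
      · exact h1
  have hub : dF M v δ x ≤ δ - dpt l e b t₁ := by
    refine Real.sSup_le ?_ (by linarith)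
    rintro u (rfl | ⟨e', b', t', hvb', ht', hrep', rfl⟩)
    · linarith
    · rw [← hrepx] at hrep'
      obtain ⟨he, ht⟩ := interior_rep M ht₁o ht' hrep'
      subst he; subst ht
      have : dpt l e' b t' ≤ dpt l e' b' t' := by
        rcases Bool.eq_false_or_eq_true b' with hb' | hb' <;>
          rcases Bool.eq_false_or_eq_true b with hb | hb <;> subst hb' <;> subst hb
        · exact le_rfl
        · have := dpt_add (l := l) (e := e') (t := t')
          rw [dpt_false] at hd ⊢; rw [dpt_true]; linarith [h2δ e']
        · have := dpt_add (l := l) (e := e') (t := t')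
          rw [dpt_true] at hd ⊢; rw [dpt_false]; linarith [h2δ e']
        · exact le_rfl
      linarith
  have hdge : dpt l e b t₁ ≤ dist (M.vmap v) x := by
    have := dist_ge_dF M v hδ hδl x; linarith
  have hdle : dist (M.vmap v) x ≤ dpt l e b t₁ := hrepx ▸ dist_le_rep M hvb ht₁
  rw [hx] at hdge hdle
  have hdr : dpt l e b t₁ = r := le_antisymm hdge hdle
  refine ⟨e, b, hvb, ?_⟩
  rw [← hrepx]
  cases b
  · rw [dpt_false] at hdr
    rw [hdr]
    norm_num
  · rw [dpt_true] at hdr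
    have ht₁r : t₁ = l e - r := by linarith
    rw [ht₁r]
    norm_num

theorem valence_eq_two (M : ModelMaps G l Γ) (v : G.V) {ε : ℝ} (hε : 0 < ε)
    (iso : ↥(Metric.ball (M.vmap v) ε) ≃ᵢ ↥(Set.Ioo (-ε) ε)) : G.valence v = 2 := by
  classical
  obtain ⟨⟨e₀, b₀⟩, -⟩ := exists_halfedge M v
  have hEne : (Finset.univ : Finset G.E).Nonempty := ⟨e₀, Finset.mem_univ _⟩
  set δ : ℝ := (Finset.univ.inf' hEne l) / 2 with hδdef
  have hinf : 0 < Finset.univ.inf' hEne l :=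
    (Finset.lt_inf'_iff hEne).2 fun e _ => M.pos e
  have hδ0 : 0 < δ := by rw [hδdef]; linarith
  have h2δ : ∀ e, 2 * δ ≤ l e := fun e => by
    have := Finset.inf'_le (f := l) (Finset.mem_univ e)
    rw [hδdef]; linarith
  have hvmem : M.vmap v ∈ Metric.ball (M.vmap v) ε := Metric.mem_ball_self hε
  set c0 : ↥(Metric.ball (M.vmap v) ε) := ⟨M.vmap v, hvmem⟩ with hc0
  set a : ℝ := (iso c0 : ↥(Set.Ioo (-ε) ε)).1 with ha
  have haI : a ∈ Set.Ioo (-ε) ε := (iso c0).2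
  have haabs : |a| < ε := abs_lt.2 ⟨haI.1, haI.2⟩
  set r : ℝ := min δ (ε - |a|) / 2 with hrdef
  have hr0 : 0 < r := by
    have h1 : 0 < min δ (ε - |a|) := lt_min hδ0 (by linarith)
    rw [hrdef]; linarith
  have hrδ : r < δ := by
    have := min_le_left δ (ε - |a|); rw [hrdef]; linarith
  have hrε : r < ε - |a| := by
    have := min_le_right δ (ε - |a|); rw [hrdef]; linarith
  have hrε' : r < ε := by linarith [abs_nonneg a]
  set Sph : Set Γ.carrier := {x | dist (M.vmap v) x = r} with hSphdef
  have tauIoo : ∀ (e : G.E) (b : Bool),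
      (if b then l e - r else r) ∈ Set.Ioo (0:ℝ) (l e) := by
    intro e b
    have h2 := h2δ e
    rw [Set.mem_Ioo]
    cases b
    · constructor
      · show (0:ℝ) < r; exact hr0
      · show r < l e; linarith
    · constructor
      · show (0:ℝ) < l e - r; linarith
      · show l e - r < l e; linarith
  have hdpt_tau : ∀ (e : G.E) (b : Bool), dpt l e b (if b then l e - r else r) = r := by
    intro e b
    cases b
    · rw [if_neg (by simp), dpt_false]
    · rw [if_pos rfl, dpt_true]; ring
  let f : {h : G.E × Bool // G.vend h.1 h.2 = v} → ↥Sph := fun h =>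
    ⟨M.emap h.1.1 (if h.1.2 then l h.1.1 - r else r),
      sphere_point M hδ0 h2δ h.2 hr0 hrδ (hdpt_tau h.1.1 h.1.2) (tauIoo h.1.1 h.1.2)⟩
  have hfbij : Function.Bijective f := by
    constructor
    · rintro ⟨⟨e₁, b₁⟩, h₁⟩ ⟨⟨e₂, b₂⟩, h₂⟩ hf
      have hf' : M.emap e₁ (if b₁ then l e₁ - r else r) =
          M.emap e₂ (if b₂ then l e₂ - r else r) := congrArg Subtype.val hf
      by_cases he : e₁ = e₂
      · subst he
        have hIoo₁ := tauIoo e₁ b₁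
        have hIoo₂ := tauIoo e₁ b₂
        have heq := M.emap_injOn e₁ ⟨hIoo₁.1.le, hIoo₁.2⟩ ⟨hIoo₂.1.le, hIoo₂.2⟩ hf'
        have hb : b₁ = b₂ := by
          rcases Bool.eq_false_or_eq_true b₁ with hb₁ | hb₁ <;>
            rcases Bool.eq_false_or_eq_true b₂ with hb₂ | hb₂ <;> subst hb₁ <;> subst hb₂
          · rfl
          · exfalso
            rw [if_pos rfl, if_neg (by simp)] at heq
            linarith [h2δ e₁]
          · exfalso
            rw [if_neg (by simp), if_pos rfl] at heq
            linarith [h2δ e₁]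
          · rfl
        subst hb; rfl
      · exact absurd hf'
          (M.int_disjoint e₁ e₂ he _ (tauIoo e₁ b₁) _ (tauIoo e₂ b₂))
    · rintro ⟨x, hx⟩
      obtain ⟨e, b, hvb, rfl⟩ := sphere_rep M hδ0 h2δ hr0 hrδ hx
      exact ⟨⟨(e, b), hvb⟩, rfl⟩
  set Sph' : Set ↥(Set.Ioo (-ε) ε) := {y | dist y (iso c0) = r} with hSph'def
  let g : ↥Sph → ↥Sph' := fun x =>
    ⟨iso ⟨x.1, by
        rw [Metric.mem_ball, dist_comm]
        exact lt_of_le_of_lt (le_of_eq x.2) hrε'⟩, by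
      show dist _ _ = r
      rw [iso.dist_eq, Subtype.dist_eq, dist_comm]
      exact x.2⟩
  have hgbij : Function.Bijective g := by
    constructor
    · rintro x₁ x₂ hg
      have h1 := congrArg Subtype.val hg
      have h2 := iso.injective h1
      exact Subtype.ext (congrArg (fun p : ↥(Metric.ball (M.vmap v) ε) => p.1) h2)
    · rintro ⟨y, hy⟩
      refine ⟨⟨(iso.symm y).1, ?_⟩, ?_⟩
      · show dist (M.vmap v) (iso.symm y).1 = r
        have : dist (iso.symm y) c0 = r := by
          rw [← iso.dist_eq, iso.apply_symm_apply]
          exact hy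
        rw [← this, Subtype.dist_eq, dist_comm]
      · refine Subtype.ext ?_
        show iso ⟨(iso.symm y).1, _⟩ = y
        have : (⟨(iso.symm y).1, _⟩ : ↥(Metric.ball (M.vmap v) ε)) = iso.symm y :=
          Subtype.ext rfl
        rw [this, iso.apply_symm_apply]
  have hcard2 : Nat.card ↥Sph' = 2 := by
    have hmem₁ : a + r ∈ Set.Ioo (-ε) ε := by
      constructor
      · linarith [neg_abs_le a]
      · linarith [le_abs_self a]
    have hmem₂ : a - r ∈ Set.Ioo (-ε) ε := by
      constructor
      · linarith [neg_abs_le a]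
      · linarith [le_abs_self a]
    have hSph'eq : Sph' = {(⟨a + r, hmem₁⟩ : ↥(Set.Ioo (-ε) ε)), ⟨a - r, hmem₂⟩} := by
      ext y
      simp only [hSph'def, Set.mem_setOf_eq, Set.mem_insert_iff, Set.mem_singleton_iff]
      rw [Subtype.dist_eq, Real.dist_eq]
      rw [show ((iso c0 : ↥(Set.Ioo (-ε) ε)) : ℝ) = a from rfl]
      rw [abs_eq hr0.le]
      constructor
      · rintro (h | h)
        · left; exact Subtype.ext (show (y:ℝ) = a + r by linarith)
        · right; exact Subtype.ext (show (y:ℝ) = a - r by linarith)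
      · rintro (rfl | rfl)
        · left; show a + r - a = r; ring
        · right; show a - r - a = -r; ring
    rw [hSph'eq, Nat.card_coe_set_eq]
    exact Set.ncard_pair (by
      intro h
      have := congrArg Subtype.val h
      simp only at this
      linarith)
  calc G.valence v = Nat.card {h : G.E × Bool // G.vend h.1 h.2 = v} := rfl
    _ = Nat.card ↥Sph := Nat.card_congr (Equiv.ofBijective f hfbij)
    _ = Nat.card ↥Sph' := Nat.card_congr (Equiv.ofBijective g hgbij)
    _ = 2 := hcard2

end Reps

section Subdivide

variable {G : FinGraph} {l : G.E → ℝ}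

theorem adj_symm {G : FinGraph} {u w : G.V} (h : G.Adj u w) : G.Adj w u := by
  obtain ⟨e, h | h⟩ := h
  exacts [⟨e, Or.inr h⟩, ⟨e, Or.inl h⟩]

theorem subdivide (M : ModelMaps G l Γ) (e₀ : G.E) {m : ℝ}
    (hm : m ∈ Set.Ioo (0:ℝ) (l e₀)) :
    ∃ (G' : FinGraph) (l' : G'.E → ℝ) (M' : ModelMaps G' l' Γ),
      Set.range M'.vmap = Set.range M.vmap ∪ {M.emap e₀ m} := by
  classical
  obtain ⟨hm0, hml⟩ := hm
  haveI : Fintype {e : G.E // e ≠ e₀} := Fintype.ofFinite _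
  set G' : FinGraph :=
    { V := G.V ⊕ Unit
      E := {e : G.E // e ≠ e₀} ⊕ Bool
      fintypeV := inferInstance
      fintypeE := inferInstance
      src := Sum.elim (fun e => Sum.inl (G.src e.1))
        (fun b => if b then Sum.inr () else Sum.inl (G.src e₀))
      tgt := Sum.elim (fun e => Sum.inl (G.tgt e.1))
        (fun b => if b then Sum.inl (G.tgt e₀) else Sum.inr ()) } with hG'
  set l' : G'.E → ℝ := Sum.elim (fun e => l e.1) (fun b => if b then l e₀ - m else m)
    with hl'
  set vmap' : G'.V → Γ.carrier := Sum.elim M.vmap (fun _ => M.emap e₀ m) with hvmap'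
  set emap' : G'.E → ℝ → Γ.carrier := Sum.elim (fun e => M.emap e.1)
    (fun b => if b then (fun t => M.emap e₀ (m + t)) else (fun t => M.emap e₀ t))
    with hemap'
  have hlA : l' (Sum.inr false) = m := rfl
  have hlB : l' (Sum.inr true) = l e₀ - m := rfl
  have hlI : ∀ e : {e : G.E // e ≠ e₀}, l' (Sum.inl e) = l e.1 := fun _ => rfl
  have hA : ∀ t : ℝ, emap' (Sum.inr false) t = M.emap e₀ t := fun _ => rfl
  have hB : ∀ t : ℝ, emap' (Sum.inr true) t = M.emap e₀ (m + t) := fun _ => rfl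
  have hI : ∀ (e : {e : G.E // e ≠ e₀}) (t : ℝ), emap' (Sum.inl e) t = M.emap e.1 t :=
    fun _ _ => rfl
  refine ⟨G', l', ⟨?_, ?_, vmap', emap', ?_, ?_, ?_, ?_, ?_, ?_, ?_, ?_⟩, ?_⟩
  · -- pos
    rintro (e | b)
    · exact M.pos e.1
    · cases b
      · exact hm0
      · show (0:ℝ) < l e₀ - m; linarith
  · -- conn
    have hstep : ∀ u w : G.V, G.Adj u w →
        Relation.ReflTransGen G'.Adj (Sum.inl u) (Sum.inl w) := by
      intro u w hadj
      obtain ⟨e, he⟩ := hadj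
      by_cases he₀ : e = e₀
      · subst he₀
        have h1 : G'.Adj (Sum.inl (G.src e)) (Sum.inr ()) :=
          ⟨Sum.inr false, Or.inl ⟨rfl, rfl⟩⟩
        have h2 : G'.Adj (Sum.inr ()) (Sum.inl (G.tgt e)) :=
          ⟨Sum.inr true, Or.inl ⟨rfl, rfl⟩⟩
        rcases he with ⟨rfl, rfl⟩ | ⟨rfl, rfl⟩
        · exact (Relation.ReflTransGen.single h1).tail h2
        · exact (Relation.ReflTransGen.single (adj_symm h2)).tail (adj_symm h1)
      · rcases he with ⟨rfl, rfl⟩ | ⟨rfl, rfl⟩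
        · exact Relation.ReflTransGen.single ⟨Sum.inl ⟨e, he₀⟩, Or.inl ⟨rfl, rfl⟩⟩
        · exact Relation.ReflTransGen.single ⟨Sum.inl ⟨e, he₀⟩, Or.inr ⟨rfl, rfl⟩⟩
    have hlift : ∀ u w : G.V,
        Relation.ReflTransGen G.Adj u w →
        Relation.ReflTransGen G'.Adj (Sum.inl u) (Sum.inl w) := by
      intro u w h
      induction h with
      | refl => exact Relation.ReflTransGen.refl
      | tail _ h2 ih => exact ih.trans (hstep _ _ h2)
    obtain ⟨⟨u₀⟩, hwalk⟩ := M.conn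
    have hmid : Relation.ReflTransGen G'.Adj (Sum.inr ()) (Sum.inl (G.src e₀)) :=
      Relation.ReflTransGen.single (adj_symm ⟨Sum.inr false, Or.inl ⟨rfl, rfl⟩⟩)
    refine ⟨⟨Sum.inl u₀⟩, ?_⟩
    rintro (u | ⟨⟩) (w | ⟨⟩)
    · exact hlift u w (hwalk u w)
    · exact (hlift u (G.src e₀) (hwalk _ _)).trans
        (Relation.ReflTransGen.single ⟨Sum.inr false, Or.inl ⟨rfl, rfl⟩⟩)
    · exact hmid.trans (hlift _ w (hwalk _ _))
    · exact Relation.ReflTransGen.refl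
  · -- vmap_inj
    rintro (u | ⟨⟩) (w | ⟨⟩) h
    · exact congrArg Sum.inl (M.vmap_inj h)
    · exact absurd h.symm (M.int_not_vertex e₀ m ⟨hm0, hml⟩ u)
    · exact absurd h (M.int_not_vertex e₀ m ⟨hm0, hml⟩ w)
    · rfl
  · -- emap_src
    rintro (e | b)
    · exact M.emap_src e.1
    · cases b
      · exact M.emap_src e₀
      · show M.emap e₀ (m + 0) = M.emap e₀ m
        rw [add_zero]
  · -- emap_tgt
    rintro (e | b)
    · exact M.emap_tgt e.1
    · cases b
      · rfl
      · show M.emap e₀ (m + (l e₀ - m)) = M.vmap (G.tgt e₀)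
        rw [show m + (l e₀ - m) = l e₀ by ring, M.emap_tgt]
  · -- emap_injOn
    rintro (e | b)
    · exact M.emap_injOn e.1
    · cases b
      · intro t ht s hs h
        exact M.emap_injOn e₀ ⟨ht.1, lt_of_lt_of_le ht.2 hml.le⟩
          ⟨hs.1, lt_of_lt_of_le hs.2 hml.le⟩ h
      · intro t ht s hs h
        rw [hlB, Set.mem_Ico] at ht hs
        rw [hB, hB] at h
        have := M.emap_injOn e₀ (show m + t ∈ Set.Ico 0 (l e₀) from ⟨by linarith, by linarith⟩)
          (show m + s ∈ Set.Ico 0 (l e₀) from ⟨by linarith, by linarith⟩) h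
        linarith
  · -- cover
    intro x
    obtain ⟨e, t, ht, hx⟩ := M.cover x
    by_cases he₀ : e = e₀
    · subst he₀
      by_cases htm : t ≤ m
      · exact ⟨Sum.inr false, t, ⟨ht.1, htm⟩, hx⟩
      · refine ⟨Sum.inr true, t - m, ?_, ?_⟩
        · rw [hlB, Set.mem_Icc]
          constructor <;> linarith [ht.2]
        · rw [hB, show m + (t - m) = t by ring]
          exact hx
    · exact ⟨Sum.inl ⟨e, he₀⟩, t, ht, hx⟩
  · -- int_disjoint
    have hIontoA : ∀ t, t ∈ Set.Ioo (0:ℝ) (l' (Sum.inr false)) → t ∈ Set.Ioo (0:ℝ) (l e₀) :=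
      fun t ht => ⟨ht.1, lt_trans ht.2 hml⟩
    have hIontoB : ∀ t, t ∈ Set.Ioo (0:ℝ) (l' (Sum.inr true)) →
        m + t ∈ Set.Ioo (0:ℝ) (l e₀) := by
      intro t ht
      rw [hlB, Set.mem_Ioo] at ht
      exact ⟨by linarith, by linarith⟩
    rintro (e₁ | b₁) (e₂ | b₂) hne t₁ ht₁ t₂ ht₂
    · exact M.int_disjoint e₁.1 e₂.1
        (fun h => hne (congrArg Sum.inl (Subtype.ext h))) t₁ ht₁ t₂ ht₂
    · cases b₂
      · exact M.int_disjoint e₁.1 e₀ e₁.2 t₁ ht₁ t₂ (hIontoA t₂ ht₂)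
      · rw [hB]
        exact M.int_disjoint e₁.1 e₀ e₁.2 t₁ ht₁ (m + t₂) (hIontoB t₂ ht₂)
    · cases b₁
      · exact M.int_disjoint e₀ e₂.1 (Ne.symm e₂.2) t₁ (hIontoA t₁ ht₁) t₂ ht₂
      · rw [hB]
        exact M.int_disjoint e₀ e₂.1 (Ne.symm e₂.2) (m + t₁) (hIontoB t₁ ht₁) t₂ ht₂
    · cases b₁ <;> cases b₂
      · exact absurd rfl hne
      · rw [hA, hB]
        intro h
        have := M.emap_injOn e₀ ⟨(hIontoA t₁ ht₁).1.le, (hIontoA t₁ ht₁).2⟩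
          ⟨(hIontoB t₂ ht₂).1.le, (hIontoB t₂ ht₂).2⟩ h
        rw [hlA] at ht₁
        rw [hlB, Set.mem_Ioo] at ht₂
        linarith [ht₁.2]
      · rw [hA, hB]
        intro h
        have := M.emap_injOn e₀ ⟨(hIontoB t₁ ht₁).1.le, (hIontoB t₁ ht₁).2⟩
          ⟨(hIontoA t₂ ht₂).1.le, (hIontoA t₂ ht₂).2⟩ h
        rw [hlA] at ht₂
        rw [hlB, Set.mem_Ioo] at ht₁
        linarith [ht₂.2]
      · exact absurd rfl hne
  · -- int_not_vertex
    rintro (e | b) t ht (u | ⟨⟩)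
    · exact M.int_not_vertex e.1 t ht u
    · exact M.int_disjoint e.1 e₀ e.2 t ht m ⟨hm0, hml⟩
    · cases b
      · exact M.int_not_vertex e₀ t ⟨ht.1, lt_trans ht.2 hml⟩ u
      · rw [hB]
        rw [hlB, Set.mem_Ioo] at ht
        exact M.int_not_vertex e₀ (m + t) ⟨by linarith, by linarith⟩ u
    · cases b
      · rw [hA]
        intro h
        have := M.emap_injOn e₀ ⟨ht.1.le, lt_trans ht.2 hml⟩ ⟨hm0.le, hml⟩ h
        exact absurd this (ne_of_lt ht.2)
      · rw [hB]
        intro h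
        rw [hlB, Set.mem_Ioo] at ht
        have := M.emap_injOn e₀ ⟨by linarith, by linarith⟩ ⟨hm0.le, hml⟩ h
        linarith
  · -- dist_eq
    refine dist_eq_of_steps M emap' ?_ ?_
    · -- old steps refine to new chains
      intro e t ht s hs
      by_cases he₀ : e = e₀
      · subst he₀
        by_cases htm : t ≤ m <;> by_cases hsm : s ≤ m
        · have c := Chain.single (l := l') (emap := emap') (e := Sum.inr false)
            (t := t) (s := s) (by rw [hlA, Set.mem_Icc]; exact ⟨ht.1, htm⟩)
            (by rw [hlA, Set.mem_Icc]; exact ⟨hs.1, hsm⟩)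
          rwa [hA, hA] at c
        · -- t ≤ m < s : go through the midpoint
          push_neg at hsm
          have c₁ := Chain.single (l := l') (emap := emap') (e := Sum.inr false)
            (t := t) (s := m) (by rw [hlA, Set.mem_Icc]; exact ⟨ht.1, htm⟩)
            (by rw [hlA, Set.mem_Icc]; exact ⟨hm0.le, le_refl m⟩)
          have c₂ := Chain.single (l := l') (emap := emap') (e := Sum.inr true)
            (t := 0) (s := s - m)
            (by rw [hlB, Set.mem_Icc]; constructor <;> linarith [hs.2])
            (by rw [hlB, Set.mem_Icc]; constructor <;> linarith [hs.2])
          rw [hA, hA] at c₁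
          rw [hB, hB, add_zero, show m + (s - m) = s by ring] at c₂
          have c := c₁.trans c₂
          rw [show |t - m| + |0 - (s - m)| = |t - s| by
            rw [abs_of_nonpos (by linarith), abs_of_nonpos (by linarith),
              abs_of_nonpos (by linarith)]; ring] at c
          exact c
        · -- s ≤ m < t
          push_neg at htm
          have c₁ := Chain.single (l := l') (emap := emap') (e := Sum.inr true)
            (t := t - m) (s := 0)
            (by rw [hlB, Set.mem_Icc]; constructor <;> linarith [ht.2])
            (by rw [hlB, Set.mem_Icc]; constructor <;> linarith [ht.2])
          have c₂ := Chain.single (l := l') (emap := emap') (e := Sum.inr false)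
            (t := m) (s := s) (by rw [hlA, Set.mem_Icc]; exact ⟨hm0.le, le_refl m⟩)
            (by rw [hlA, Set.mem_Icc]; exact ⟨hs.1, hsm⟩)
          rw [hB, hB, add_zero, show m + (t - m) = t by ring] at c₁
          rw [hA, hA] at c₂
          have c := c₁.trans c₂
          rw [show |t - m - 0| + |m - s| = |t - s| by
            rw [abs_of_nonneg (by linarith), abs_of_nonneg (by linarith),
              abs_of_nonneg (by linarith)]; ring] at c
          exact c
        · push_neg at htm
          push_neg at hsm
          have c := Chain.single (l := l') (emap := emap') (e := Sum.inr true)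
            (t := t - m) (s := s - m)
            (by rw [hlB, Set.mem_Icc]; constructor <;> linarith [ht.2])
            (by rw [hlB, Set.mem_Icc]; constructor <;> linarith [hs.2])
          rw [hB, hB, show m + (t - m) = t by ring, show m + (s - m) = s by ring,
            show t - m - (s - m) = t - s by ring] at c
          exact c
      · exact Chain.single (l := l') (emap := emap') (e := Sum.inl ⟨e, he₀⟩) ht hs
    · -- new steps refine to old chains
      rintro (e | b) t ht s hs
      · exact Chain.single (l := l) (emap := M.emap) (e := e.1) ht hs
      · cases b
        · rw [hlA, Set.mem_Icc] at ht hs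
          have c := Chain.single (l := l) (emap := M.emap) (e := e₀) (t := t) (s := s)
            ⟨ht.1, le_trans ht.2 hml.le⟩ ⟨hs.1, le_trans hs.2 hml.le⟩
          rwa [← hA, ← hA] at c
        · rw [hlB, Set.mem_Icc] at ht hs
          have c := Chain.single (l := l) (emap := M.emap) (e := e₀)
            (t := m + t) (s := m + s)
            (show m + t ∈ Set.Icc 0 (l e₀) from ⟨by linarith [ht.1], by linarith [ht.2]⟩)
            (show m + s ∈ Set.Icc 0 (l e₀) from ⟨by linarith [hs.1], by linarith [hs.2]⟩)
          rw [show m + t - (m + s) = t - s by ring] at c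
          rwa [← hB, ← hB] at c
  · -- range of the new vertex map
    show Set.range vmap' = Set.range M.vmap ∪ {M.emap e₀ m}
    ext x
    constructor
    · rintro ⟨u | ⟨⟩, rfl⟩
      · exact Or.inl ⟨u, rfl⟩
      · exact Or.inr rfl
    · rintro (⟨u, rfl⟩ | rfl)
      · exact ⟨Sum.inl u, rfl⟩
      · exact ⟨Sum.inr (), rfl⟩

end Subdivide

section Smooth

variable {G : FinGraph} {l : G.E → ℝ}

/-- On an edge with distinct endpoints, the parametrization is injective on the
whole closed interval. -/
theorem emap_injOn_Icc (M : ModelMaps G l Γ) {e : G.E} (hloop : G.src e ≠ G.tgt e) :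
    ∀ a ∈ Set.Icc (0:ℝ) (l e), ∀ b ∈ Set.Icc (0:ℝ) (l e),
      M.emap e a = M.emap e b → a = b := by
  have key : ∀ a ∈ Set.Icc (0:ℝ) (l e), M.emap e a = M.vmap (G.tgt e) → a = l e := by
    intro a ha hea
    rcases vertex_rep M ha hea with ⟨rfl, h⟩ | ⟨h, -⟩
    · exact absurd h hloop
    · exact h
  intro a ha b hb h
  rcases ha.2.eq_or_lt with hal | hal
  · rw [hal]
    exact (key b hb (by rw [← h, hal, M.emap_tgt])).symm
  rcases hb.2.eq_or_lt with hbl | hbl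
  · rw [hbl]
    exact key a ha (by rw [h, hbl, M.emap_tgt])
  · exact M.emap_injOn e ⟨ha.1, hal⟩ ⟨hb.1, hbl⟩ h

theorem smooth (M : ModelMaps G l Γ) (v : G.V) (e₁ e₂ : G.E) (b₁ b₂ : Bool)
    (hv₁ : G.vend e₁ b₁ = v) (hv₂ : G.vend e₂ b₂ = v) (hne : e₁ ≠ e₂)
    (hcov : ∀ h : G.E × Bool, G.vend h.1 h.2 = v → h = (e₁, b₁) ∨ h = (e₂, b₂)) :
    ∃ (G' : FinGraph) (l' : G'.E → ℝ) (M' : ModelMaps G' l' Γ),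
      Set.range M'.vmap = Set.range M.vmap \ {M.vmap v} ∧
      Nat.card G'.V < Nat.card G.V := by
  classical
  set u₁ : G.V := G.vend e₁ (!b₁) with hu₁def
  set u₂ : G.V := G.vend e₂ (!b₂) with hu₂def
  have hu₁ : u₁ ≠ v := by
    intro h
    rcases hcov (e₁, !b₁) h with h' | h'
    · have := congrArg Prod.snd h'
      simp at this
    · exact hne (congrArg Prod.fst h')
  have hu₂ : u₂ ≠ v := by
    intro h
    rcases hcov (e₂, !b₂) h with h' | h'
    · exact hne (congrArg Prod.fst h').symm
    · have := congrArg Prod.snd h'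
      simp at this
  have hloop₁ : G.src e₁ ≠ G.tgt e₁ := by
    intro h
    apply hu₁
    rw [hu₁def, ← hv₁]
    cases b₁ <;> simp [FinGraph.vend, h]
  have hloop₂ : G.src e₂ ≠ G.tgt e₂ := by
    intro h
    apply hu₂
    rw [hu₂def, ← hv₂]
    cases b₂ <;> simp [FinGraph.vend, h]
  have hends₁ : (G.src e₁ = v ∧ G.tgt e₁ = u₁) ∨ (G.src e₁ = u₁ ∧ G.tgt e₁ = v) := by
    cases b₁
    · exact Or.inl ⟨hv₁, rfl⟩
    · exact Or.inr ⟨rfl, hv₁⟩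
  have hends₂ : (G.src e₂ = v ∧ G.tgt e₂ = u₂) ∨ (G.src e₂ = u₂ ∧ G.tgt e₂ = v) := by
    cases b₂
    · exact Or.inl ⟨hv₂, rfl⟩
    · exact Or.inr ⟨rfl, hv₂⟩
  have hnotinc : ∀ e : G.E, e ≠ e₁ → e ≠ e₂ → G.src e ≠ v ∧ G.tgt e ≠ v := by
    intro e h1 h2
    constructor
    · intro h
      rcases hcov (e, false) h with h' | h' <;>
        [exact h1 (congrArg Prod.fst h'); exact h2 (congrArg Prod.fst h')]
    · intro h
      rcases hcov (e, true) h with h' | h' <;>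
        [exact h1 (congrArg Prod.fst h'); exact h2 (congrArg Prod.fst h')]
  -- reparametrizations
  set p₁ : ℝ → ℝ := fun t => if b₁ then t else l e₁ - t with hp₁def
  set p₂ : ℝ → ℝ := fun s => if b₂ then l e₂ - s else s with hp₂def
  have hl₁ := M.pos e₁
  have hl₂ := M.pos e₂
  have p₁mem : ∀ t, t ∈ Set.Icc (0:ℝ) (l e₁) → p₁ t ∈ Set.Icc (0:ℝ) (l e₁) := by
    intro t ht
    rw [hp₁def]
    cases b₁ <;> simp only [if_pos, if_neg, Bool.false_eq_true, if_false, if_true] <;>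
      exact ⟨by linarith [ht.1, ht.2], by linarith [ht.1, ht.2]⟩
  have p₂mem : ∀ t, t ∈ Set.Icc (0:ℝ) (l e₂) → p₂ t ∈ Set.Icc (0:ℝ) (l e₂) := by
    intro t ht
    rw [hp₂def]
    cases b₂ <;> simp only [if_pos, if_neg, Bool.false_eq_true, if_false, if_true] <;>
      exact ⟨by linarith [ht.1, ht.2], by linarith [ht.1, ht.2]⟩
  have p₁memIoo : ∀ t, t ∈ Set.Ioo (0:ℝ) (l e₁) → p₁ t ∈ Set.Ioo (0:ℝ) (l e₁) := by
    intro t ht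
    rw [hp₁def]
    cases b₁ <;> simp only [Bool.false_eq_true, if_false, if_true] <;>
      exact ⟨by linarith [ht.1, ht.2], by linarith [ht.1, ht.2]⟩
  have p₂memIoo : ∀ t, t ∈ Set.Ioo (0:ℝ) (l e₂) → p₂ t ∈ Set.Ioo (0:ℝ) (l e₂) := by
    intro t ht
    rw [hp₂def]
    cases b₂ <;> simp only [Bool.false_eq_true, if_false, if_true] <;>
      exact ⟨by linarith [ht.1, ht.2], by linarith [ht.1, ht.2]⟩
  have p₁inv : ∀ t, p₁ (p₁ t) = t := by
    intro t
    rw [hp₁def]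
    cases b₁ <;> simp
  have p₂inv : ∀ t, p₂ (p₂ t) = t := by
    intro t
    rw [hp₂def]
    cases b₂ <;> simp
  have habs₁ : ∀ t s : ℝ, |p₁ t - p₁ s| = |t - s| := by
    intro t s
    rw [hp₁def]
    cases b₁
    · simp only [Bool.false_eq_true, if_false]
      rw [show l e₁ - t - (l e₁ - s) = -(t - s) by ring, abs_neg]
    · simp
  have habs₂ : ∀ t s : ℝ, |p₂ t - p₂ s| = |t - s| := by
    intro t s
    rw [hp₂def]
    cases b₂
    · simp
    · simp only [if_true]
      rw [show l e₂ - t - (l e₂ - s) = -(t - s) by ring, abs_neg]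
  have hp₁v : M.emap e₁ (p₁ (l e₁)) = M.vmap v := by
    rw [← hv₁, hp₁def]
    cases b₁
    · show M.emap e₁ (l e₁ - l e₁) = _
      rw [sub_self, M.emap_src]
      rfl
    · show M.emap e₁ (l e₁) = _
      rw [M.emap_tgt]
      rfl
  have hp₁u : M.emap e₁ (p₁ 0) = M.vmap u₁ := by
    rw [hu₁def, hp₁def]
    cases b₁
    · show M.emap e₁ (l e₁ - 0) = _
      rw [sub_zero, M.emap_tgt]
      rfl
    · show M.emap e₁ 0 = _
      rw [M.emap_src]
      rfl
  have hp₂v : M.emap e₂ (p₂ 0) = M.vmap v := by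
    rw [← hv₂, hp₂def]
    cases b₂
    · show M.emap e₂ 0 = _
      rw [M.emap_src]
      rfl
    · show M.emap e₂ (l e₂ - 0) = _
      rw [sub_zero, M.emap_tgt]
      rfl
  have hp₂u : M.emap e₂ (p₂ (l e₂)) = M.vmap u₂ := by
    rw [hu₂def, hp₂def]
    cases b₂
    · show M.emap e₂ (l e₂) = _
      rw [M.emap_tgt]
      rfl
    · show M.emap e₂ (l e₂ - l e₂) = _
      rw [sub_self, M.emap_src]
      rfl
  -- the new graph
  haveI : Fintype {u : G.V // u ≠ v} := Fintype.ofFinite _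
  haveI : Fintype {e : G.E // e ≠ e₁ ∧ e ≠ e₂} := Fintype.ofFinite _
  set L : ℝ := l e₁ + l e₂ with hLdef
  set G' : FinGraph :=
    { V := {u : G.V // u ≠ v}
      E := {e : G.E // e ≠ e₁ ∧ e ≠ e₂} ⊕ Unit
      fintypeV := inferInstance
      fintypeE := inferInstance
      src := Sum.elim (fun e => ⟨G.src e.1, (hnotinc e.1 e.2.1 e.2.2).1⟩)
        (fun _ => ⟨u₁, hu₁⟩)
      tgt := Sum.elim (fun e => ⟨G.tgt e.1, (hnotinc e.1 e.2.1 e.2.2).2⟩)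
        (fun _ => ⟨u₂, hu₂⟩) } with hG'
  set l' : G'.E → ℝ := Sum.elim (fun e => l e.1) (fun _ => L) with hl'
  set vmap' : G'.V → Γ.carrier := fun u => M.vmap u.1 with hvmap'
  set emap' : G'.E → ℝ → Γ.carrier := Sum.elim (fun e => M.emap e.1)
    (fun _ t => if t ≤ l e₁ then M.emap e₁ (p₁ t) else M.emap e₂ (p₂ (t - l e₁)))
    with hemap'
  have hlI : ∀ e : {e : G.E // e ≠ e₁ ∧ e ≠ e₂}, l' (Sum.inl e) = l e.1 := fun _ => rfl
  have hlL : l' (Sum.inr ()) = L := rfl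
  have hEm₁ : ∀ t : ℝ, t ≤ l e₁ → emap' (Sum.inr ()) t = M.emap e₁ (p₁ t) := by
    intro t h
    show (if t ≤ l e₁ then M.emap e₁ (p₁ t) else M.emap e₂ (p₂ (t - l e₁))) = _
    rw [if_pos h]
  have hEm₂ : ∀ t : ℝ, ¬ t ≤ l e₁ → emap' (Sum.inr ()) t = M.emap e₂ (p₂ (t - l e₁)) := by
    intro t h
    show (if t ≤ l e₁ then M.emap e₁ (p₁ t) else M.emap e₂ (p₂ (t - l e₁))) = _
    rw [if_neg h]
  have hEm₁' : ∀ τ, τ ∈ Set.Icc (0:ℝ) (l e₁) → emap' (Sum.inr ()) (p₁ τ) = M.emap e₁ τ := by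
    intro τ hτ
    rw [hEm₁ _ (p₁mem τ hτ).2, p₁inv]
  have hEm₂' : ∀ τ, τ ∈ Set.Icc (0:ℝ) (l e₂) →
      emap' (Sum.inr ()) (l e₁ + p₂ τ) = M.emap e₂ τ := by
    intro τ hτ
    by_cases h : l e₁ + p₂ τ ≤ l e₁
    · have hp0 : p₂ τ = 0 := le_antisymm (by linarith) (p₂mem τ hτ).1
      have hτ0 : τ = p₂ 0 := by rw [← hp0, p₂inv]
      rw [hEm₁ _ h, hp0, add_zero, hp₁v, hτ0, hp₂v]
    · rw [hEm₂ _ h, show l e₁ + p₂ τ - l e₁ = p₂ τ by ring, p₂inv]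
  have hmemL₁ : ∀ τ, τ ∈ Set.Icc (0:ℝ) (l e₁) → p₁ τ ∈ Set.Icc (0:ℝ) L := by
    intro τ hτ
    have := p₁mem τ hτ
    exact ⟨this.1, by rw [hLdef]; linarith [this.2]⟩
  have hmemL₂ : ∀ τ, τ ∈ Set.Icc (0:ℝ) (l e₂) → l e₁ + p₂ τ ∈ Set.Icc (0:ℝ) L := by
    intro τ hτ
    have := p₂mem τ hτ
    exact ⟨by linarith [this.1], by rw [hLdef]; linarith [this.2]⟩
  -- decomposition of interior points of the merged edge
  have hdec : ∀ t, t ∈ Set.Ioo (0:ℝ) L →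
      (∃ τ ∈ Set.Ioo (0:ℝ) (l e₁), emap' (Sum.inr ()) t = M.emap e₁ τ) ∨
      (∃ τ ∈ Set.Ioo (0:ℝ) (l e₂), emap' (Sum.inr ()) t = M.emap e₂ τ) ∨
      emap' (Sum.inr ()) t = M.vmap v := by
    intro t ht
    rcases lt_trichotomy t (l e₁) with h | h | h
    · exact Or.inl ⟨p₁ t, p₁memIoo t ⟨ht.1, h⟩, hEm₁ t h.le⟩
    · right; right
      rw [hEm₁ t h.le, h, hp₁v]
    · refine Or.inr (Or.inl ⟨p₂ (t - l e₁), p₂memIoo _ ?_, hEm₂ t (not_le.2 h)⟩)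
      constructor
      · linarith
      · have := ht.2
        rw [hLdef] at this
        linarith
  refine ⟨G', l', ⟨?_, ?_, vmap', emap', ?_, ?_, ?_, ?_, ?_, ?_, ?_, ?_⟩, ?_, ?_⟩
  · -- pos
    rintro (e | ⟨⟩)
    · exact M.pos e.1
    · show (0:ℝ) < L
      rw [hLdef]; linarith
  · -- conn
    set ρ : G.V → G'.V := fun u => if h : u = v then ⟨u₁, hu₁⟩ else ⟨u, h⟩ with hρdef
    have hρv : ρ v = ⟨u₁, hu₁⟩ := dif_pos rfl
    have hρ : ∀ (u : G.V) (h : u ≠ v), ρ u = ⟨u, h⟩ := fun u h => dif_neg h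
    have hadj12 : G'.Adj ⟨u₁, hu₁⟩ ⟨u₂, hu₂⟩ := ⟨Sum.inr (), Or.inl ⟨rfl, rfl⟩⟩
    have hpair : ∀ p q : G'.V, (p = ⟨u₁, hu₁⟩ ∨ p = ⟨u₂, hu₂⟩) →
        (q = ⟨u₁, hu₁⟩ ∨ q = ⟨u₂, hu₂⟩) → Relation.ReflTransGen G'.Adj p q := by
      rintro p q (rfl | rfl) (rfl | rfl)
      · exact Relation.ReflTransGen.refl
      · exact Relation.ReflTransGen.single hadj12
      · exact Relation.ReflTransGen.single (adj_symm hadj12)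
      · exact Relation.ReflTransGen.refl
    have hρ1 : ∀ x : G.V, x = v ∨ x = u₁ → ρ x = ⟨u₁, hu₁⟩ := by
      rintro x (rfl | rfl)
      · exact hρv
      · exact hρ u₁ hu₁
    have hρ2 : ∀ x : G.V, x = v ∨ x = u₂ → ρ x = ⟨u₁, hu₁⟩ ∨ ρ x = ⟨u₂, hu₂⟩ := by
      rintro x (rfl | rfl)
      · exact Or.inl hρv
      · exact Or.inr (hρ u₂ hu₂)
    have hadj : ∀ a c : G.V, G.Adj a c →
        Relation.ReflTransGen G'.Adj (ρ a) (ρ c) := by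
      rintro a c ⟨e, he⟩
      by_cases h1 : e = e₁
      · subst h1
        have ha : a = v ∨ a = u₁ := by
          rcases he with ⟨rfl, -⟩ | ⟨-, rfl⟩ <;> rcases hends₁ with ⟨h', h''⟩ | ⟨h', h''⟩
          · exact Or.inl h'
          · exact Or.inr h'
          · exact Or.inr h''
          · exact Or.inl h''
        have hc : c = v ∨ c = u₁ := by
          rcases he with ⟨-, rfl⟩ | ⟨rfl, -⟩ <;> rcases hends₁ with ⟨h', h''⟩ | ⟨h', h''⟩
          · exact Or.inr h''
          · exact Or.inl h''
          · exact Or.inl h'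
          · exact Or.inr h'
        rw [hρ1 a ha, hρ1 c hc]
      by_cases h2 : e = e₂
      · subst h2
        have ha : a = v ∨ a = u₂ := by
          rcases he with ⟨rfl, -⟩ | ⟨-, rfl⟩ <;> rcases hends₂ with ⟨h', h''⟩ | ⟨h', h''⟩
          · exact Or.inl h'
          · exact Or.inr h'
          · exact Or.inr h''
          · exact Or.inl h''
        have hc : c = v ∨ c = u₂ := by
          rcases he with ⟨-, rfl⟩ | ⟨rfl, -⟩ <;> rcases hends₂ with ⟨h', h''⟩ | ⟨h', h''⟩
          · exact Or.inr h''
          · exact Or.inl h''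
          · exact Or.inl h'
          · exact Or.inr h'
        exact hpair _ _ (hρ2 a ha) (hρ2 c hc)
      · have hsrc := (hnotinc e h1 h2).1
        have htgt := (hnotinc e h1 h2).2
        rcases he with ⟨rfl, rfl⟩ | ⟨rfl, rfl⟩
        · rw [hρ _ hsrc, hρ _ htgt]
          exact Relation.ReflTransGen.single ⟨Sum.inl ⟨e, h1, h2⟩, Or.inl ⟨rfl, rfl⟩⟩
        · rw [hρ _ htgt, hρ _ hsrc]
          exact Relation.ReflTransGen.single ⟨Sum.inl ⟨e, h1, h2⟩, Or.inr ⟨rfl, rfl⟩⟩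
    have hlift : ∀ a c : G.V, Relation.ReflTransGen G.Adj a c →
        Relation.ReflTransGen G'.Adj (ρ a) (ρ c) := by
      intro a c h
      induction h with
      | refl => exact Relation.ReflTransGen.refl
      | tail _ h2 ih => exact ih.trans (hadj _ _ h2)
    refine ⟨⟨⟨u₁, hu₁⟩⟩, ?_⟩
    intro p q
    have := hlift p.1 q.1 (M.conn.2 p.1 q.1)
    rwa [hρ p.1 p.2, hρ q.1 q.2, Subtype.coe_eta, Subtype.coe_eta] at this
  · -- vmap_inj
    intro a b h
    exact Subtype.ext (M.vmap_inj h)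
  · -- emap_src
    rintro (e | ⟨⟩)
    · exact M.emap_src e.1
    · show emap' (Sum.inr ()) 0 = M.vmap u₁
      rw [hEm₁ 0 hl₁.le, hp₁u]
  · -- emap_tgt
    rintro (e | ⟨⟩)
    · exact M.emap_tgt e.1
    · show emap' (Sum.inr ()) L = M.vmap u₂
      rw [hEm₂ L (by rw [hLdef]; linarith), show L - l e₁ = l e₂ by rw [hLdef]; ring, hp₂u]
  · -- emap_injOn
    rintro (e | ⟨⟩)
    · exact M.emap_injOn e.1
    · intro t ht s hs h
      rw [show Set.Ico (0:ℝ) (l' (Sum.inr ())) = Set.Ico (0:ℝ) L from rfl,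
        Set.mem_Ico] at ht hs
      by_cases hts : t ≤ l e₁ <;> by_cases hss : s ≤ l e₁
      · rw [hEm₁ t hts, hEm₁ s hss] at h
        have := emap_injOn_Icc M hloop₁ _ (p₁mem t ⟨ht.1, hts⟩) _ (p₁mem s ⟨hs.1, hss⟩) h
        have := congrArg p₁ this
        rwa [p₁inv, p₁inv] at this
      · exfalso
        push_neg at hss
        rw [hEm₁ t hts, hEm₂ s (not_le.2 hss)] at h
        have hsI : p₂ (s - l e₁) ∈ Set.Ioo (0:ℝ) (l e₂) := by
          refine p₂memIoo _ ⟨by linarith, ?_⟩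
          have := hs.2; rw [hLdef] at this; linarith
        exact hne (interior_rep M hsI (p₁mem t ⟨ht.1, hts⟩) h).1
      · exfalso
        push_neg at hts
        rw [hEm₂ t (not_le.2 hts), hEm₁ s hss] at h
        have htI : p₂ (t - l e₁) ∈ Set.Ioo (0:ℝ) (l e₂) := by
          refine p₂memIoo _ ⟨by linarith, ?_⟩
          have := ht.2; rw [hLdef] at this; linarith
        exact hne (interior_rep M htI (p₁mem s ⟨hs.1, hss⟩) h.symm).1
      · push_neg at hts hss
        rw [hEm₂ t (not_le.2 hts), hEm₂ s (not_le.2 hss)] at h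
        have htL := ht.2; have hsL := hs.2
        rw [hLdef] at htL hsL
        have := emap_injOn_Icc M hloop₂ _
          (p₂mem (t - l e₁) ⟨by linarith, by linarith⟩) _
          (p₂mem (s - l e₁) ⟨by linarith, by linarith⟩) h
        have := congrArg p₂ this
        rw [p₂inv, p₂inv] at this
        linarith
  · -- cover
    intro x
    obtain ⟨e, t, ht, hx⟩ := M.cover x
    by_cases h1 : e = e₁
    · subst h1
      exact ⟨Sum.inr (), p₁ t, hmemL₁ t ht, by rw [hEm₁' t ht]; exact hx⟩
    by_cases h2 : e = e₂
    · subst h2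
      exact ⟨Sum.inr (), l e₁ + p₂ t, hmemL₂ t ht, by rw [hEm₂' t ht]; exact hx⟩
    · exact ⟨Sum.inl ⟨e, h1, h2⟩, t, ht, hx⟩
  · -- int_disjoint
    rintro (ea | ⟨⟩) (eb | ⟨⟩) hne' t₁ ht₁ t₂ ht₂
    · exact M.int_disjoint ea.1 eb.1
        (fun h => hne' (congrArg Sum.inl (Subtype.ext h))) t₁ ht₁ t₂ ht₂
    · rcases hdec t₂ ht₂ with ⟨τ, hτ, heq⟩ | ⟨τ, hτ, heq⟩ | heq
      · rw [heq]
        exact M.int_disjoint ea.1 e₁ ea.2.1 t₁ ht₁ τ hτ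
      · rw [heq]
        exact M.int_disjoint ea.1 e₂ ea.2.2 t₁ ht₁ τ hτ
      · rw [heq]
        exact M.int_not_vertex ea.1 t₁ ht₁ v
    · rcases hdec t₁ ht₁ with ⟨τ, hτ, heq⟩ | ⟨τ, hτ, heq⟩ | heq
      · rw [heq]
        exact M.int_disjoint e₁ eb.1 (Ne.symm eb.2.1) τ hτ t₂ ht₂
      · rw [heq]
        exact M.int_disjoint e₂ eb.1 (Ne.symm eb.2.2) τ hτ t₂ ht₂
      · rw [heq]
        exact (M.int_not_vertex eb.1 t₂ ht₂ v).symm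
    · exact absurd rfl hne'
  · -- int_not_vertex
    rintro (e | ⟨⟩) t ht u
    · exact M.int_not_vertex e.1 t ht u.1
    · rcases hdec t ht with ⟨τ, hτ, heq⟩ | ⟨τ, hτ, heq⟩ | heq
      · rw [heq]
        exact M.int_not_vertex e₁ τ hτ u.1
      · rw [heq]
        exact M.int_not_vertex e₂ τ hτ u.1
      · rw [heq]
        intro h
        exact u.2 (M.vmap_inj h).symm
  · -- dist_eq
    refine dist_eq_of_steps M emap' ?_ ?_
    · -- old steps refine to new chains
      intro e t ht s hs
      by_cases h1 : e = e₁
      · subst h1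
        have c := Chain.single (l := l') (emap := emap') (e := Sum.inr ())
          (t := p₁ t) (s := p₁ s) (hmemL₁ t ht) (hmemL₁ s hs)
        rwa [hEm₁' t ht, hEm₁' s hs, habs₁] at c
      by_cases h2 : e = e₂
      · subst h2
        have c := Chain.single (l := l') (emap := emap') (e := Sum.inr ())
          (t := l e₁ + p₂ t) (s := l e₁ + p₂ s) (hmemL₂ t ht) (hmemL₂ s hs)
        rwa [hEm₂' t ht, hEm₂' s hs,
          show l e₁ + p₂ t - (l e₁ + p₂ s) = p₂ t - p₂ s by ring, habs₂] at c
      · exact Chain.single (l := l') (emap := emap') (e := Sum.inl ⟨e, h1, h2⟩) ht hs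
    · -- new steps refine to old chains
      rintro (e | ⟨⟩) t ht s hs
      · exact Chain.single (l := l) (emap := M.emap) (e := e.1) ht hs
      · rw [show Set.Icc (0:ℝ) (l' (Sum.inr ())) = Set.Icc (0:ℝ) L from rfl,
          Set.mem_Icc] at ht hs
        have htL := ht.2; have hsL := hs.2
        rw [hLdef] at htL hsL
        by_cases hts : t ≤ l e₁ <;> by_cases hss : s ≤ l e₁
        · have c := Chain.single (l := l) (emap := M.emap) (e := e₁)
            (t := p₁ t) (s := p₁ s) (p₁mem t ⟨ht.1, hts⟩) (p₁mem s ⟨hs.1, hss⟩)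
          rwa [← hEm₁ t hts, ← hEm₁ s hss, habs₁] at c
        · -- t ≤ l e₁ < s : through the vertex
          push_neg at hss
          have c₁ := Chain.single (l := l) (emap := M.emap) (e := e₁)
            (t := p₁ t) (s := p₁ (l e₁)) (p₁mem t ⟨ht.1, hts⟩)
            (p₁mem (l e₁) ⟨hl₁.le, le_refl _⟩)
          have c₂ := Chain.single (l := l) (emap := M.emap) (e := e₂)
            (t := p₂ 0) (s := p₂ (s - l e₁)) (p₂mem 0 ⟨le_refl _, hl₂.le⟩)
            (p₂mem (s - l e₁) ⟨by linarith, by linarith⟩)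
          rw [← hEm₁ t hts, hp₁v, habs₁] at c₁
          rw [← hEm₂ s (not_le.2 hss), hp₂v, habs₂] at c₂
          have c := c₁.trans c₂
          rw [show |t - l e₁| + |0 - (s - l e₁)| = |t - s| by
            rw [abs_of_nonpos (by linarith), abs_of_nonpos (by linarith),
              abs_of_nonpos (by linarith)]; ring] at c
          exact c
        · push_neg at hts
          have c₁ := Chain.single (l := l) (emap := M.emap) (e := e₂)
            (t := p₂ (t - l e₁)) (s := p₂ 0)
            (p₂mem (t - l e₁) ⟨by linarith, by linarith⟩) (p₂mem 0 ⟨le_refl _, hl₂.le⟩)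
          have c₂ := Chain.single (l := l) (emap := M.emap) (e := e₁)
            (t := p₁ (l e₁)) (s := p₁ s) (p₁mem (l e₁) ⟨hl₁.le, le_refl _⟩)
            (p₁mem s ⟨hs.1, hss⟩)
          rw [← hEm₂ t (not_le.2 hts), hp₂v, habs₂] at c₁
          rw [← hEm₁ s hss, hp₁v, habs₁] at c₂
          have c := c₁.trans c₂
          rw [show |t - l e₁ - 0| + |l e₁ - s| = |t - s| by
            rw [abs_of_nonneg (by linarith), abs_of_nonneg (by linarith),
              abs_of_nonneg (by linarith)]; ring] at c
          exact c
        · push_neg at hts hss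
          have c := Chain.single (l := l) (emap := M.emap) (e := e₂)
            (t := p₂ (t - l e₁)) (s := p₂ (s - l e₁))
            (p₂mem (t - l e₁) ⟨by linarith, by linarith⟩)
            (p₂mem (s - l e₁) ⟨by linarith, by linarith⟩)
          rwa [← hEm₂ t (not_le.2 hts), ← hEm₂ s (not_le.2 hss), habs₂,
            show t - l e₁ - (s - l e₁) = t - s by ring] at c
  · -- range
    show Set.range vmap' = Set.range M.vmap \ {M.vmap v}
    ext x
    constructor
    · rintro ⟨u, rfl⟩
      refine ⟨⟨u.1, rfl⟩, ?_⟩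
      intro h
      exact u.2 (M.vmap_inj h)
    · rintro ⟨⟨u, rfl⟩, hx⟩
      have huv : u ≠ v := fun h => hx (by rw [h]; rfl)
      exact ⟨⟨u, huv⟩, rfl⟩
  · -- cardinality decreases
    show Nat.card {u : G.V // u ≠ v} < Nat.card G.V
    have h1 : Nat.card {u : G.V // u ≠ v} = ({u : G.V | u ≠ v} : Set G.V).ncard :=
      Nat.card_coe_set_eq _
    rw [h1, ← Set.ncard_univ]
    refine Set.ncard_lt_ncard ?_ Set.finite_univ
    constructor
    · exact Set.subset_univ _
    · intro hsub
      exact (hsub (Set.mem_univ v)) rfl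

end Smooth

theorem all_eq_of_loop {G : FinGraph} (hconn : G.Connected) {v : G.V} {e₁ : G.E}
    (hcov : ∀ h : G.E × Bool, G.vend h.1 h.2 = v → h.1 = e₁)
    (hsrc : G.src e₁ = v) (htgt : G.tgt e₁ = v) : ∀ u, u = v := by
  intro u
  have h := hconn.2 v u
  induction h with
  | refl => rfl
  | tail _ h2 ih =>
    obtain ⟨e, ⟨hs, ht⟩ | ⟨hs, ht⟩⟩ := h2
    · have he : e = e₁ := hcov (e, false) (show G.src e = v by rw [hs, ih])
      rw [← ht, he, htgt]
    · have he : e = e₁ := hcov (e, true) (show G.tgt e = v by rw [ht, ih])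
      rw [← hs, he, hsrc]

end VSetAux

/-- Let `Γ` be a metric graph, `𝓔` its set of essential vertices,
and `S` a nonempty finite subset of `Γ`.  If `𝓔 ⊆ S`, then `S` is a vertex set of
`Γ`. -/
theorem isVertexSet_of_essential_vertices_subset
    (Γ : MetSp) (hΓ : IsMetricGraph Γ) (S : Set Γ.carrier)
    (hfin : S.Finite) (hne : S.Nonempty)
    (hsub : {x : Γ.carrier | IsEssentialVertex Γ x} ⊆ S) :
    IsVertexSet Γ S := by
  classical
  obtain ⟨G₀, l₀, ⟨M₀⟩⟩ := hΓ
  -- Phase 1: refine the model so that `S` consists of vertex points.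
  have phase1 : ∀ (n : ℕ) (G : FinGraph) (l : G.E → ℝ) (M : ModelMaps G l Γ),
      (S \ Set.range M.vmap).ncard = n →
      ∃ (G' : FinGraph) (l' : G'.E → ℝ) (M' : ModelMaps G' l' Γ),
        S ⊆ Set.range M'.vmap := by
    intro n
    induction n using Nat.strong_induction_on with
    | _ n ih =>
      intro G l M hn
      by_cases hS : S ⊆ Set.range M.vmap
      · exact ⟨G, l, M, hS⟩
      · obtain ⟨s, hsS, hsr⟩ := Set.not_subset.1 hS
        obtain ⟨e, t, ht, hx⟩ := M.cover s
        have htI : t ∈ Set.Ioo 0 (l e) := by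
          rcases ht.1.eq_or_lt with h0 | h0
          · exact absurd ⟨G.src e, by rw [← M.emap_src, h0, hx]⟩ hsr
          rcases ht.2.eq_or_lt with h1 | h1
          · exact absurd ⟨G.tgt e, by rw [← M.emap_tgt, ← h1, hx]⟩ hsr
          · exact ⟨h0, h1⟩
        obtain ⟨G', l', M', hrange⟩ := VSetAux.subdivide M e htI
        rw [hx] at hrange
        have hcard : (S \ Set.range M'.vmap).ncard < n := by
          rw [hrange, ← Set.diff_diff, ← hn]
          exact Set.ncard_diff_singleton_lt_of_mem ⟨hsS, hsr⟩
            (hfin.diff)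
        exact ih _ hcard G' l' M' rfl
  -- Phase 2: smooth away the non-essential vertices not in `S`.
  have phase2 : ∀ (n : ℕ) (G : FinGraph) (l : G.E → ℝ) (M : ModelMaps G l Γ),
      Nat.card G.V = n → S ⊆ Set.range M.vmap → IsVertexSet Γ S := by
    intro n
    induction n using Nat.strong_induction_on with
    | _ n ih =>
      intro G l M hn hS
      by_cases hRS : Set.range M.vmap ⊆ S
      · exact ⟨G, l, M, Set.Subset.antisymm hRS hS⟩
      · obtain ⟨x, ⟨w, rfl⟩, hw⟩ := Set.not_subset.1 hRS
        -- `vmap w ∉ S`, hence it is not an essential vertex.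
        have hness : ¬ IsEssentialVertex Γ (M.vmap w) := fun h => hw (hsub h)
        have hex : ∃ ε : ℝ, 0 < ε ∧
            Nonempty (↥(Metric.ball (M.vmap w) ε) ≃ᵢ ↥(Set.Ioo (-ε) ε)) := by
          by_contra hcon
          push_neg at hcon
          exact hness fun ε hε => not_nonempty_iff.2 (hcon ε hε)
        obtain ⟨ε, hε, ⟨iso⟩⟩ := hex
        have hval := VSetAux.valence_eq_two M w hε iso
        rw [FinGraph.valence] at hval
        obtain ⟨⟨⟨eA, bA⟩, hvA⟩, ⟨⟨eB, bB⟩, hvB⟩, hne12, hcovuniv⟩ :=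
          Nat.card_eq_two_iff.1 hval
        have hcov : ∀ h : G.E × Bool, G.vend h.1 h.2 = w →
            h = (eA, bA) ∨ h = (eB, bB) := by
          intro h hh
          have hmem : (⟨h, hh⟩ : {h : G.E × Bool // G.vend h.1 h.2 = w}) ∈
              ({⟨(eA, bA), hvA⟩, ⟨(eB, bB), hvB⟩} :
                Set {h : G.E × Bool // G.vend h.1 h.2 = w}) := by
            rw [hcovuniv]; trivial
          rw [Set.mem_insert_iff, Set.mem_singleton_iff] at hmem
          rcases hmem with hmem | hmem
          · exact Or.inl (congrArg Subtype.val hmem)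
          · exact Or.inr (congrArg Subtype.val hmem)
        by_cases heAB : eA = eB
        · -- loop case : `Γ` would be a circle with no vertex in `S`
          exfalso
          subst heAB
          have hbAB : bA ≠ bB := by
            intro h
            exact hne12 (Subtype.ext (congrArg (Prod.mk eA) h))
          have hsrctgt : G.src eA = w ∧ G.tgt eA = w := by
            cases bA <;> cases bB
            · exact absurd rfl hbAB
            · exact ⟨hvA, hvB⟩
            · exact ⟨hvB, hvA⟩
            · exact absurd rfl hbAB
          have hculoop : ∀ h : G.E × Bool, G.vend h.1 h.2 = w → h.1 = eA := by
            intro h hh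
            rcases hcov h hh with h' | h' <;> exact congrArg Prod.fst h'
          have hall := VSetAux.all_eq_of_loop M.conn hculoop hsrctgt.1 hsrctgt.2
          obtain ⟨s, hsS⟩ := hne
          obtain ⟨u, hu⟩ := hS hsS
          rw [hall u] at hu
          exact hw (by rw [hu]; exact hsS)
        · obtain ⟨G', l', M', hrange, hcard⟩ :=
            VSetAux.smooth M w eA eB bA bB hvA hvB heAB hcov
          refine ih (Nat.card G'.V) (by rw [← hn]; exact hcard) G' l' M' rfl ?_
          rw [hrange]
          intro s hs
          exact ⟨hS hs, fun h => hw (by rw [← h]; exact hs)⟩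
  obtain ⟨G', l', M', hS'⟩ := phase1 _ G₀ l₀ M₀ rfl
  exact phase2 _ G' l' M' rfl hS'
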